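/- arXiv:2006.15530 — 9 statements merged into one kernel-verified Lean document; each statement's English description precedes it below -/
import Mathlib

section
/- Let L and G be N×N real matrices such that L is symmetric positive semidefinite, G is symmetric positive definite, and 2G − L is positive definite. Then every eigenvalue λ ∈ ℂ of the matrix G⁻¹L is real and satisfies 0 ≤ λ < 2; equivalently, every eigenvalue of I_N − G⁻¹L lies in the real interval (−1, 1], so the spectral radius of I_N − G⁻¹L is at most 1. Moreover, for v ∈ ℝ^N one has (I_N − G⁻¹L)v = v if and only if Lv = 0. -/
open Matrix BigOperators

private lemma quad_complexify {N : ℕ} (M : Matrix (Fin N) (Fin N) ℝ) (hM : Mᵀ = M)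
    (v : Fin N → ℂ) :
    star v ⬝ᵥ (M.map (Complex.ofReal)) *ᵥ v
      = (((fun i => (v i).re) ⬝ᵥ M *ᵥ (fun i => (v i).re)
          + (fun i => (v i).im) ⬝ᵥ M *ᵥ (fun i => (v i).im) : ℝ) : ℂ) := by
  classical
  set f : ℝ →+* ℂ := Complex.ofRealHom
  set x : Fin N → ℝ := fun i => (v i).re
  set y : Fin N → ℝ := fun i => (v i).im
  have hMc : (M.map Complex.ofReal)ᵀ = M.map Complex.ofReal := by
    rw [← Matrix.transpose_map]
    simp [hM]
  set Mc := M.map (Complex.ofReal) with hMcdef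
  have hv : v = (f ∘ x) + Complex.I • (f ∘ y) := by
    funext i
    simp [f, x, y, Complex.ext_iff]
  have hstar : star v = (f ∘ x) - Complex.I • (f ∘ y) := by
    funext i
    simp [f, x, y, Complex.ext_iff]
  have hsymm : ∀ a b : Fin N → ℂ, a ⬝ᵥ Mc *ᵥ b = b ⬝ᵥ Mc *ᵥ a := by
    intro a b
    rw [Matrix.dotProduct_mulVec]
    conv_lhs => rw [← hMc, Matrix.vecMul_transpose]
    exact dotProduct_comm _ _
  have hquad : ∀ w : Fin N → ℝ, (f ∘ w) ⬝ᵥ Mc *ᵥ (f ∘ w) = ((w ⬝ᵥ M *ᵥ w : ℝ) : ℂ) := by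
    intro w
    have h1 : Mc *ᵥ (f ∘ w) = f ∘ (M *ᵥ w) := by
      funext i
      exact (RingHom.map_mulVec f M w i).symm
    rw [h1, ← RingHom.map_dotProduct]
    rfl
  rw [hstar]
  conv_lhs => rw [hv]
  rw [Matrix.mulVec_add, Matrix.mulVec_smul, sub_dotProduct, dotProduct_add,
    dotProduct_add, smul_dotProduct, smul_dotProduct,
    dotProduct_smul, dotProduct_smul]
  rw [hsymm (f ∘ y) (f ∘ x)]
  rw [hquad, hquad]
  simp only [smul_eq_mul, ← mul_assoc, Complex.I_mul_I]
  push_cast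
  ring

private lemma exists_eigenvector {N : ℕ} (A : Matrix (Fin N) (Fin N) ℂ) {lam : ℂ}
    (h : lam ∈ spectrum ℂ A) : ∃ v : Fin N → ℂ, v ≠ 0 ∧ A *ᵥ v = lam • v := by
  classical
  rw [spectrum.mem_iff, Matrix.isUnit_iff_isUnit_det, isUnit_iff_ne_zero, not_not] at h
  obtain ⟨v, hv, hv0⟩ := (Matrix.exists_mulVec_eq_zero_iff).2 h
  refine ⟨v, hv, ?_⟩
  rw [Matrix.sub_mulVec, Algebra.algebraMap_eq_smul_one, Matrix.smul_mulVec,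
    Matrix.one_mulVec, sub_eq_zero] at hv0
  exact hv0.symm

/-- If `L` is symmetric positive semidefinite, `G` is symmetric positive
definite, and `2G − L` is positive definite, then every (complex) eigenvalue `λ` of
`G⁻¹ L` is real with `0 ≤ λ < 2`; equivalently, every eigenvalue of `I − G⁻¹ L` lies
in the real interval `(−1, 1]` (so the spectral radius of `I − G⁻¹ L` is at most `1`).
Moreover, `(I − G⁻¹ L) v = v` iff `L v = 0`. -/
theorem eigenvalues_of_inv_G_mul_L
    (N : ℕ) (hN : 1 ≤ N)
    (L G : Matrix (Fin N) (Fin N) ℝ)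
    (hL : L.PosSemidef) (hG : G.PosDef) (h2GL : (2 • G - L).PosDef) :
    (∀ lam : ℂ, lam ∈ spectrum ℂ ((G⁻¹ * L).map (Complex.ofReal)) →
      ∃ t : ℝ, lam = (t : ℂ) ∧ 0 ≤ t ∧ t < 2) ∧
    (∀ lam : ℂ,
      lam ∈ spectrum ℂ (((1 : Matrix (Fin N) (Fin N) ℝ) - G⁻¹ * L).map (Complex.ofReal)) →
      ∃ t : ℝ, lam = (t : ℂ) ∧ -1 < t ∧ t ≤ 1) ∧
    (∀ v : Fin N → ℝ,
      ((1 : Matrix (Fin N) (Fin N) ℝ) - G⁻¹ * L).mulVec v = v ↔ L.mulVec v = 0) := by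
  classical
  have hGdet : IsUnit G.det := isUnit_iff_ne_zero.mpr (ne_of_gt hG.det_pos)
  have hGG : G * G⁻¹ = 1 := Matrix.mul_nonsing_inv G hGdet
  set A : Matrix (Fin N) (Fin N) ℂ := (G⁻¹ * L).map Complex.ofReal with hA
  have hLsymm : Lᵀ = L := by
    rw [← Matrix.conjTranspose_eq_transpose_of_trivial]; exact hL.1
  have hGsymm : Gᵀ = G := by
    rw [← Matrix.conjTranspose_eq_transpose_of_trivial]; exact hG.1
  -- key statement
  have key : ∀ lam : ℂ, lam ∈ spectrum ℂ A → ∃ t : ℝ, lam = (t : ℂ) ∧ 0 ≤ t ∧ t < 2 := by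
    intro lam hlam
    obtain ⟨v, hv0, hAv⟩ := exists_eigenvector A hlam
    have hGA : (G.map Complex.ofReal) * A = L.map Complex.ofReal := by
      rw [hA]
      have : Complex.ofReal = ⇑Complex.ofRealHom := rfl
      rw [this, ← Matrix.map_mul, ← Matrix.mul_assoc, hGG, Matrix.one_mul]
    have hLv : (L.map Complex.ofReal) *ᵥ v = lam • ((G.map Complex.ofReal) *ᵥ v) := by
      rw [← hGA, ← Matrix.mulVec_mulVec, hAv, Matrix.mulVec_smul]
    set x : Fin N → ℝ := fun i => (v i).re with hx
    set y : Fin N → ℝ := fun i => (v i).im with hy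
    set qL : ℝ := x ⬝ᵥ L *ᵥ x + y ⬝ᵥ L *ᵥ y with hqL
    set qG : ℝ := x ⬝ᵥ G *ᵥ x + y ⬝ᵥ G *ᵥ y with hqG
    have hquad : ∀ (M : Matrix (Fin N) (Fin N) ℝ), (M.PosSemidef) →
        ∀ w : Fin N → ℝ, 0 ≤ w ⬝ᵥ M *ᵥ w := by
      intro M hM w
      simpa using hM.dotProduct_mulVec_nonneg w
    have hquadpos : ∀ (M : Matrix (Fin N) (Fin N) ℝ), (M.PosDef) →
        ∀ w : Fin N → ℝ, w ≠ 0 → 0 < w ⬝ᵥ M *ᵥ w := by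
      intro M hM w hw
      simpa using hM.dotProduct_mulVec_pos hw
    have hxy : x ≠ 0 ∨ y ≠ 0 := by
      by_contra h
      push_neg at h
      apply hv0
      funext i
      have h1 : (v i).re = 0 := by simpa [hx] using congrFun h.1 i
      have h2 : (v i).im = 0 := by simpa [hy] using congrFun h.2 i
      exact Complex.ext h1 h2
    have hposOf : ∀ (M : Matrix (Fin N) (Fin N) ℝ), M.PosDef →
        0 < x ⬝ᵥ M *ᵥ x + y ⬝ᵥ M *ᵥ y := by
      intro M hM
      rcases hxy with hx0 | hy0
      · exact add_pos_of_pos_of_nonneg (hquadpos M hM x hx0) (hquad M hM.posSemidef y)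
      · exact add_pos_of_nonneg_of_pos (hquad M hM.posSemidef x) (hquadpos M hM y hy0)
    have hqL0 : 0 ≤ qL := add_nonneg (hquad L hL x) (hquad L hL y)
    have hqGpos : 0 < qG := hposOf G hG
    have hqD : 0 < (qG + qG) - qL := by
      have h1 := hposOf _ h2GL
      have expand : ∀ w : Fin N → ℝ,
          w ⬝ᵥ (2 • G - L) *ᵥ w = w ⬝ᵥ G *ᵥ w + w ⬝ᵥ G *ᵥ w - w ⬝ᵥ L *ᵥ w := by
        intro w
        rw [two_smul, Matrix.sub_mulVec, Matrix.add_mulVec, dotProduct_sub,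
          dotProduct_add]
      rw [expand, expand] at h1
      rw [hqL, hqG]
      linarith
    have ha : star v ⬝ᵥ (L.map Complex.ofReal) *ᵥ v = (qL : ℂ) :=
      quad_complexify L hLsymm v
    have hb : star v ⬝ᵥ (G.map Complex.ofReal) *ᵥ v = (qG : ℂ) :=
      quad_complexify G hGsymm v
    have hab : (qL : ℂ) = lam * (qG : ℂ) := by
      rw [← ha, ← hb, hLv, dotProduct_smul, smul_eq_mul]
    have hqGne : (qG : ℂ) ≠ 0 := by
      exact_mod_cast ne_of_gt hqGpos
    refine ⟨qL / qG, ?_, div_nonneg hqL0 hqGpos.le, ?_⟩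
    · rw [Complex.ofReal_div, eq_comm, div_eq_iff hqGne]
      exact hab
    · rw [div_lt_iff₀ hqGpos]
      linarith
  refine ⟨key, ?_, ?_⟩
  · intro lam hlam
    have hmap : ((1 : Matrix (Fin N) (Fin N) ℝ) - G⁻¹ * L).map Complex.ofReal
        = 1 - A := by
      ext i j
      simp only [Matrix.map_apply, Matrix.sub_apply, Matrix.one_apply, hA]
      split <;> simp
    rw [hmap] at hlam
    have h1s : (1 - lam) ∈ spectrum ℂ A := by
      rw [spectrum.mem_iff] at hlam ⊢
      intro hu
      apply hlam
      have heq : algebraMap ℂ (Matrix (Fin N) (Fin N) ℂ) lam - (1 - A)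
          = -((algebraMap ℂ (Matrix (Fin N) (Fin N) ℂ)) (1 - lam) - A) := by
        rw [map_sub, _root_.map_one]
        abel
      rw [heq]
      exact hu.neg
    obtain ⟨t, ht, h0t, ht2⟩ := key (1 - lam) h1s
    refine ⟨1 - t, ?_, by linarith, by linarith⟩
    have : lam = 1 - (1 - lam) := by ring
    rw [this, ht]
    push_cast
    ring
  · intro v
    rw [Matrix.sub_mulVec, Matrix.one_mulVec, sub_eq_self]
    constructor
    · intro h0
      have : L *ᵥ v = (G * (G⁻¹ * L)) *ᵥ v := by
        rw [← Matrix.mul_assoc, hGG, Matrix.one_mul]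
      rw [this, ← Matrix.mulVec_mulVec, h0, Matrix.mulVec_zero]
    · intro h0
      rw [← Matrix.mulVec_mulVec, h0, Matrix.mulVec_zero]
end

section
/- Let L and G be N×N real matrices such that L is symmetric positive semidefinite, G is symmetric positive definite, and 2G − L is positive definite. Then the matrix I_N − G⁻¹L is semi-convergent: the sequence of matrix powers (I_N − G⁻¹L)^k converges (entrywise) to a limit matrix as k → ∞. -/
open Matrix BigOperators Filter

lemma aux_posDef_conj {n : Type*} [Fintype n] [DecidableEq n]
    {A B : Matrix n n ℝ} (hA : A.PosDef) (hB : IsUnit B) : (Bᴴ * A * B).PosDef := by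
  refine Matrix.PosDef.of_dotProduct_mulVec_pos (Matrix.isHermitian_conjTranspose_mul_mul B hA.1) fun x hx => ?_
  have hinj : Function.Injective (B.mulVec) := Matrix.mulVec_injective_iff_isUnit.mpr hB
  have hBx : B *ᵥ x ≠ 0 := (hinj.ne_iff' (Matrix.mulVec_zero B)).2 hx
  simpa only [star_mulVec, dotProduct_mulVec, vecMul_vecMul] using hA.dotProduct_mulVec_pos hBx

lemma aux_conj_pow {n : Type*} [Fintype n] [DecidableEq n]
    (P D Q : Matrix n n ℝ) (hQP : Q * P = 1) (hPQ : P * Q = 1) (k : ℕ) :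
    (P * D * Q) ^ k = P * D ^ k * Q := by
  induction k with
  | zero => simpa using hPQ.symm
  | succ k ih =>
    rw [pow_succ, pow_succ, ih]
    calc P * D ^ k * Q * (P * D * Q) = P * D ^ k * (Q * (P * (D * Q))) := by
          simp only [Matrix.mul_assoc]
      _ = P * D ^ k * (D * Q) := by rw [← Matrix.mul_assoc Q P, hQP, Matrix.one_mul]
      _ = P * (D ^ k * D) * Q := by simp only [Matrix.mul_assoc]

/-- If `L` is symmetric positive semidefinite, `G` is symmetric positive
definite, and `2G − L` is positive definite, then the matrix `I − G⁻¹ L` is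
semi-convergent: its powers converge entrywise to a limit matrix. -/
theorem semi_convergence_of_consensus_matrix
    (N : ℕ) (hN : 1 ≤ N)
    (L G : Matrix (Fin N) (Fin N) ℝ)
    (hL : L.PosSemidef) (hG : G.PosDef) (h2GL : (2 • G - L).PosDef) :
    ∃ Minf : Matrix (Fin N) (Fin N) ℝ,
      ∀ p q : Fin N,
        Tendsto (fun k : ℕ => (((1 : Matrix (Fin N) (Fin N) ℝ) - G⁻¹ * L) ^ k) p q)
          atTop (nhds (Minf p q)) := by
  classical
  open MatrixOrder in set S : Matrix (Fin N) (Fin N) ℝ := CFC.sqrt G with hSdef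
  open MatrixOrder in have hSps : S.PosSemidef := Matrix.nonneg_iff_posSemidef.mp (CFC.sqrt_nonneg G)
  open MatrixOrder in have hSsq : S * S = G := CFC.sqrt_mul_sqrt_self G hG.posSemidef.nonneg
  -- S is invertible
  have hdetS : IsUnit S.det := by
    have h1 : S.det * S.det = G.det := by rw [← Matrix.det_mul, hSsq]
    have h2 : (0:ℝ) < G.det := hG.det_pos
    refine isUnit_iff_ne_zero.mpr fun h => ?_
    rw [h, mul_zero] at h1; exact h2.ne (h1)
  have hSunit : IsUnit S := (Matrix.isUnit_iff_isUnit_det S).mpr hdetS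
  have hSiS : S⁻¹ * S = 1 := Matrix.nonsing_inv_mul S hdetS
  have hSSi : S * S⁻¹ = 1 := Matrix.mul_nonsing_inv S hdetS
  have hSiH : (S⁻¹)ᴴ = S⁻¹ := by
    rw [Matrix.conjTranspose_nonsing_inv, hSps.1.eq]
  have hSiUnit : IsUnit (S⁻¹) := Matrix.isUnit_nonsing_inv_iff.mpr hSunit
  set B : Matrix (Fin N) (Fin N) ℝ := S⁻¹ * L * S⁻¹ with hBdef
  have hB : B.PosSemidef := by
    have := hL.conjTranspose_mul_mul_same (S⁻¹)
    rwa [hSiH] at this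
  -- 2•1 - B is PosDef
  have hGconj : S⁻¹ * G * S⁻¹ = 1 := by
    rw [← hSsq, ← Matrix.mul_assoc, Matrix.mul_assoc (S⁻¹ * S), hSiS, hSSi, Matrix.one_mul]
  have h2B : ((2:ℕ) • (1 : Matrix (Fin N) (Fin N) ℝ) - B).PosDef := by
    have h := aux_posDef_conj h2GL hSiUnit
    rw [hSiH] at h
    have heq : S⁻¹ * (2 • G - L) * S⁻¹ = (2:ℕ) • (1 : Matrix (Fin N) (Fin N) ℝ) - B := by
      rw [Matrix.mul_sub, Matrix.sub_mul]
      congr 1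
      rw [Matrix.mul_smul, Matrix.smul_mul, hGconj]
    rwa [heq] at h
  -- eigenvalues of B
  set μ : Fin N → ℝ := hB.1.eigenvalues with hμdef
  have hμ0 : ∀ i, 0 ≤ μ i := hB.eigenvalues_nonneg
  have hμ2 : ∀ i, μ i < 2 := by
    intro i
    set v : Fin N → ℝ := ⇑(hB.1.eigenvectorBasis i) with hvdef
    have hv : B *ᵥ v = μ i • v := hB.1.mulVec_eigenvectorBasis i
    have hvne : v ≠ 0 := by
      intro h
      exact hB.1.eigenvectorBasis.orthonormal.ne_zero i (by ext j; exact congrFun h j)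
    have hpos := h2B.dotProduct_mulVec_pos hvne
    have hdot : (0:ℝ) < v ⬝ᵥ v := by
      rcases dotProduct_star_self_pos_iff (v := v) with ⟨h1, h2⟩
      simpa [star_trivial] using h2 hvne
    have hexpand : star v ⬝ᵥ (((2:ℕ) • (1 : Matrix (Fin N) (Fin N) ℝ) - B) *ᵥ v)
        = (2 - μ i) * (v ⬝ᵥ v) := by
      rw [Matrix.sub_mulVec, hv]
      simp [star_trivial, dotProduct_sub, dotProduct_smul, smul_eq_mul, two_smul,
        Matrix.add_mulVec, Matrix.one_mulVec, dotProduct_add]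
      ring
    rw [hexpand] at hpos
    nlinarith
  -- spectral decomposition
  set U : Matrix (Fin N) (Fin N) ℝ := (hB.1.eigenvectorUnitary : Matrix (Fin N) (Fin N) ℝ)
    with hUdef
  have hU1 : U * star U = 1 := Matrix.mem_unitaryGroup_iff.mp hB.1.eigenvectorUnitary.2
  have hU2 : star U * U = 1 := Matrix.mem_unitaryGroup_iff'.mp hB.1.eigenvectorUnitary.2
  have hspec : B = U * Matrix.diagonal μ * star U := by
    have := hB.1.spectral_theorem
    simpa [RCLike.ofReal_real_eq_id, Function.comp] using this
  set lam : Fin N → ℝ := fun i => 1 - μ i with hlamdef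
  set P : Matrix (Fin N) (Fin N) ℝ := S⁻¹ * U with hPdef
  set Q : Matrix (Fin N) (Fin N) ℝ := star U * S with hQdef
  have hQP : Q * P = 1 := by
    rw [hQdef, hPdef, Matrix.mul_assoc, ← Matrix.mul_assoc S, hSSi, Matrix.one_mul, hU2]
  have hPQ : P * Q = 1 := by
    rw [hPdef, hQdef, Matrix.mul_assoc, ← Matrix.mul_assoc U, hU1, Matrix.one_mul, hSiS]
  have hA : U * Matrix.diagonal lam * star U = 1 - B := by
    have hd : Matrix.diagonal lam = 1 - Matrix.diagonal μ := by
      rw [← Matrix.diagonal_one, Matrix.diagonal_sub]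
    rw [hd, Matrix.mul_sub, Matrix.sub_mul, Matrix.mul_one, hU1, ← hspec]
  have hGi : G⁻¹ = S⁻¹ * S⁻¹ := by rw [← hSsq, Matrix.mul_inv_rev]
  have hM : (1 : Matrix (Fin N) (Fin N) ℝ) - G⁻¹ * L = P * Matrix.diagonal lam * Q := by
    have h1 : S⁻¹ * B * S = G⁻¹ * L := by
      rw [hBdef, hGi]
      simp only [Matrix.mul_assoc, hSiS, Matrix.mul_one]
    calc (1 : Matrix (Fin N) (Fin N) ℝ) - G⁻¹ * L = S⁻¹ * (1 - B) * S := by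
          rw [Matrix.mul_sub, Matrix.sub_mul, Matrix.mul_one, hSiS, h1]
      _ = S⁻¹ * (U * Matrix.diagonal lam * star U) * S := by rw [hA]
      _ = P * Matrix.diagonal lam * Q := by
          rw [hPdef, hQdef]; simp only [Matrix.mul_assoc]
  set ell : Fin N → ℝ := fun i => if μ i = 0 then (1:ℝ) else 0 with helldef
  have hlim : ∀ i, Tendsto (fun k : ℕ => lam i ^ k) atTop (nhds (ell i)) := by
    intro i
    by_cases h : μ i = 0
    · have : lam i = 1 := by simp [hlamdef, h]
      simp [helldef, h, this]
    · have hpos : 0 < μ i := lt_of_le_of_ne (hμ0 i) (Ne.symm h)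
      have h1 : |lam i| < 1 := abs_lt.mpr
        ⟨by simp only [hlamdef]; linarith [hμ2 i], by simp only [hlamdef]; linarith⟩
      simpa [helldef, h] using tendsto_pow_atTop_nhds_zero_of_abs_lt_one h1
  refine ⟨P * Matrix.diagonal ell * Q, fun p q => ?_⟩
  have hentry : ∀ d : Fin N → ℝ, (P * Matrix.diagonal d * Q) p q
      = ∑ i, P p i * (d i * Q i q) := by
    intro d
    rw [Matrix.mul_assoc, Matrix.mul_apply]
    simp [Matrix.diagonal_mul]
  have hfun : ∀ k : ℕ, (((1 : Matrix (Fin N) (Fin N) ℝ) - G⁻¹ * L) ^ k) p q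
      = ∑ i, P p i * (lam i ^ k * Q i q) := by
    intro k
    rw [hM, aux_conj_pow P _ Q hQP hPQ, Matrix.diagonal_pow, hentry]
    simp
  rw [hentry]
  simp only [hfun]
  exact tendsto_finset_sum _ fun i _ =>
    (((hlim i).mul tendsto_const_nhds).const_mul (P p i))
end

section
/- Let (A_{ij}) be a symmetric matrix-weight assignment with matrix-weighted Laplacian L. For each i pick β_i > 0 and set α_i = (‖D_i‖ + β_i)⁻¹, where ‖D_i‖ is the operator 2-norm of D_i, and let G⁻¹ = diag(α_1 I_d, …, α_n I_d). Consider the iteration x(k+1) = (I_{nd} − G⁻¹L) x(k). Then the following are equivalent: (a) for every initial vector x(0) ∈ ℝ^{nd} there exists x̂ ∈ ℝ^d such that x(k) converges to the consensus vector 1_n ⊗ x̂ = (x̂, …, x̂) as k → ∞; (b) the null space of L equals the consensus space range(1_n ⊗ I_d). -/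
open Matrix BigOperators Filter

section ConsensusAux

private lemma diag_mulVec_apply {N : Type*} [Fintype N] [DecidableEq N] (f : N → ℝ) (v : N → ℝ)
    (p : N) : (Matrix.diagonal f *ᵥ v) p = f p * v p := by
  simp [Matrix.mulVec, dotProduct, Matrix.diagonal_apply, Finset.sum_ite_eq]

private lemma dot_self_nonneg {N : Type*} [Fintype N] (v : N → ℝ) : 0 ≤ v ⬝ᵥ v :=
  Finset.sum_nonneg fun i _ => mul_self_nonneg (v i)

private lemma dot_self_pos {N : Type*} [Fintype N] {v : N → ℝ} (hv : v ≠ 0) : 0 < v ⬝ᵥ v :=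
  lt_of_le_of_ne (dot_self_nonneg v) fun h => hv (dotProduct_self_eq_zero.mp h.symm)

private lemma opnorm_quad {d : ℕ} (D : Matrix (Fin d) (Fin d) ℝ) (v : Fin d → ℝ) :
    v ⬝ᵥ (D *ᵥ v) ≤ ‖Matrix.toEuclideanCLM (𝕜 := ℝ) D‖ * (v ⬝ᵥ v) := by
  classical
  set u : EuclideanSpace ℝ (Fin d) := (WithLp.equiv 2 _).symm v with hu
  have h1 : v ⬝ᵥ (D *ᵥ v) = inner ℝ u (Matrix.toEuclideanCLM (𝕜 := ℝ) D u) := by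
    rw [hu]
    simp [PiLp.inner_apply, RCLike.inner_apply, dotProduct, Matrix.toLin'_apply, mul_comm]
  have h2 : v ⬝ᵥ v = ‖u‖ ^ 2 := by
    rw [← real_inner_self_eq_norm_sq]
    simp only [hu, PiLp.inner_apply, RCLike.inner_apply, dotProduct]
    simp
  rw [h1, h2]
  calc inner ℝ u (Matrix.toEuclideanCLM (𝕜 := ℝ) D u)
      ≤ ‖u‖ * ‖Matrix.toEuclideanCLM (𝕜 := ℝ) D u‖ := real_inner_le_norm _ _
    _ ≤ ‖u‖ * (‖Matrix.toEuclideanCLM (𝕜 := ℝ) D‖ * ‖u‖) := by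
        gcongr; exact ContinuousLinearMap.le_opNorm _ _
    _ = ‖Matrix.toEuclideanCLM (𝕜 := ℝ) D‖ * ‖u‖ ^ 2 := by ring

private lemma pow_spec {N : Type*} [Fintype N] [DecidableEq N] (S : Matrix N N ℝ)
    (hS : S.IsHermitian) (k : ℕ) :
    S ^ k = (hS.eigenvectorUnitary : Matrix N N ℝ) * diagonal (fun i => hS.eigenvalues i ^ k)
      * (star (hS.eigenvectorUnitary : Matrix N N ℝ)) := by
  set U : Matrix N N ℝ := (hS.eigenvectorUnitary : Matrix N N ℝ) with hU
  have hUU : (star U) * U = 1 := (Matrix.mem_unitaryGroup_iff').mp (hS.eigenvectorUnitary).2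
  have hUU' : U * (star U) = 1 := (Matrix.mem_unitaryGroup_iff).mp (hS.eigenvectorUnitary).2
  have hspec : S = U * diagonal hS.eigenvalues * star U := by
    have := hS.spectral_theorem
    rwa [show (RCLike.ofReal ∘ hS.eigenvalues : N → ℝ) = hS.eigenvalues from rfl] at this
  induction k with
  | zero => simpa [pow_zero, Matrix.diagonal_one] using hUU'.symm
  | succ k ih =>
      rw [pow_succ, ih]
      have : (U * diagonal (fun i => hS.eigenvalues i ^ k)) * star U
            * (U * diagonal hS.eigenvalues * star U)
          = (U * diagonal (fun i => hS.eigenvalues i ^ (k+1))) * star U := by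
        calc (U * diagonal (fun i => hS.eigenvalues i ^ k)) * star U
              * (U * diagonal hS.eigenvalues * star U)
            = U * (diagonal (fun i => hS.eigenvalues i ^ k) * (star U * U)
                * diagonal hS.eigenvalues) * star U := by
              simp only [Matrix.mul_assoc]
          _ = _ := by
              rw [hUU, mul_one, diagonal_mul_diagonal]
              simp [pow_succ]
      rw [← hspec] at this
      exact this

private lemma block_dot {n d : ℕ} (M : Fin n → Fin n → Matrix (Fin d) (Fin d) ℝ)
    (Lm : Matrix (Fin n × Fin d) (Fin n × Fin d) ℝ)
    (h : ∀ p q : Fin n × Fin d, Lm p q = M p.1 q.1 p.2 q.2) (x y : Fin n × Fin d → ℝ) :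
    x ⬝ᵥ (Lm *ᵥ y) = ∑ i, ∑ j, (fun a => x (i,a)) ⬝ᵥ (M i j *ᵥ fun b => y (j,b)) := by
  simp only [dotProduct, Matrix.mulVec, h, Finset.mul_sum, Fintype.sum_prod_type]
  exact Finset.sum_congr rfl fun i _ => Finset.sum_comm

private lemma block_mulVec {n d : ℕ} (M : Fin n → Fin n → Matrix (Fin d) (Fin d) ℝ)
    (Lm : Matrix (Fin n × Fin d) (Fin n × Fin d) ℝ)
    (h : ∀ p q : Fin n × Fin d, Lm p q = M p.1 q.1 p.2 q.2) (y : Fin n × Fin d → ℝ)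
    (p : Fin n × Fin d) :
    (Lm *ᵥ y) p = ∑ j, (M p.1 j *ᵥ fun b => y (j,b)) p.2 := by
  simp only [Matrix.mulVec, dotProduct, h, Fintype.sum_prod_type]

private def xb {n d : ℕ} (x : Fin n × Fin d → ℝ) (i : Fin n) : Fin d → ℝ := fun a => x (i, a)

private lemma sum_mulVec_apply {d : ℕ} {ι : Type*} (s : Finset ι)
    (A : ι → Matrix (Fin d) (Fin d) ℝ) (w : Fin d → ℝ) (a : Fin d) :
    ((∑ k ∈ s, A k) *ᵥ w) a = ∑ k ∈ s, (A k *ᵥ w) a := by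
  simp only [Matrix.mulVec, dotProduct, Matrix.sum_apply, Finset.sum_mul]
  exact Finset.sum_comm

private lemma dot_sum_mulVec {d : ℕ} {ι : Type*} (s : Finset ι)
    (A : ι → Matrix (Fin d) (Fin d) ℝ) (u w : Fin d → ℝ) :
    u ⬝ᵥ ((∑ k ∈ s, A k) *ᵥ w) = ∑ k ∈ s, u ⬝ᵥ (A k *ᵥ w) := by
  simp only [dotProduct, sum_mulVec_apply, Finset.mul_sum]
  exact Finset.sum_comm

variable {n d : ℕ}
  (A : Fin n → Fin n → Matrix (Fin d) (Fin d) ℝ)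
  (L : Matrix (Fin n × Fin d) (Fin n × Fin d) ℝ)

private lemma L_block (hdiag : ∀ i, A i i = 0)
    (hL : ∀ p q : Fin n × Fin d,
      L p q = if p.1 = q.1 then (∑ k, A p.1 k) p.2 q.2 else -(A p.1 q.1 p.2 q.2)) :
    ∀ p q : Fin n × Fin d,
      L p q = (((if p.1 = q.1 then ∑ k, A p.1 k else 0) - A p.1 q.1) : Matrix (Fin d) (Fin d) ℝ) p.2 q.2 := by
  intro p q
  rw [hL]
  by_cases h : p.1 = q.1
  · rw [if_pos h, if_pos h, Matrix.sub_apply, ← h, hdiag]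
    simp
  · rw [if_neg h, if_neg h, Matrix.sub_apply, Matrix.zero_apply]
    ring

private lemma L_quad (hdiag : ∀ i, A i i = 0)
    (hL : ∀ p q : Fin n × Fin d,
      L p q = if p.1 = q.1 then (∑ k, A p.1 k) p.2 q.2 else -(A p.1 q.1 p.2 q.2))
    (x : Fin n × Fin d → ℝ) :
    x ⬝ᵥ (L *ᵥ x) = ∑ i, ∑ j,
      (xb x i ⬝ᵥ (A i j *ᵥ xb x i) - xb x i ⬝ᵥ (A i j *ᵥ xb x j)) := by
  classical
  rw [block_dot (fun i j => (if i = j then ∑ k, A i k else 0) - A i j) L (L_block A L hdiag hL) x x]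
  refine Finset.sum_congr rfl fun i _ => ?_
  simp only [Matrix.sub_mulVec, dotProduct_sub]
  rw [Finset.sum_sub_distrib, Finset.sum_sub_distrib]
  congr 1
  have h1 : ∀ j : Fin n, (fun a => x (i,a)) ⬝ᵥ ((if i = j then ∑ k, A i k else 0) *ᵥ fun b => x (j,b))
      = if i = j then (fun a => x (i,a)) ⬝ᵥ ((∑ k, A i k) *ᵥ fun b => x (i,b)) else 0 := by
    intro j
    by_cases hij : i = j
    · subst hij; simp
    · simp [hij]
  rw [Finset.sum_congr rfl (fun j _ => h1 j), Finset.sum_ite_eq Finset.univ i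
    (fun _ => (fun a => x (i,a)) ⬝ᵥ ((∑ k, A i k) *ᵥ fun b => x (i,b))), if_pos (Finset.mem_univ i)]
  rw [dot_sum_mulVec]
  rfl

private lemma L_quad_nonneg (hdiag : ∀ i, A i i = 0)
    (hsymmweights : ∀ i j, A i j = A j i)
    (hpsd : ∀ i j, (A i j).PosSemidef)
    (hL : ∀ p q : Fin n × Fin d,
      L p q = if p.1 = q.1 then (∑ k, A p.1 k) p.2 q.2 else -(A p.1 q.1 p.2 q.2))
    (x : Fin n × Fin d → ℝ) :
    0 ≤ x ⬝ᵥ (L *ᵥ x) := by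
  classical
  have psdq : ∀ (i j) (v : Fin d → ℝ), 0 ≤ v ⬝ᵥ (A i j *ᵥ v) := by
    intro i j v; simpa using (hpsd i j).re_dotProduct_nonneg v
  have swap1 : ∑ i, ∑ j, xb x j ⬝ᵥ (A i j *ᵥ xb x i) = ∑ i, ∑ j, xb x i ⬝ᵥ (A i j *ᵥ xb x j) := by
    rw [Finset.sum_comm]
    exact Finset.sum_congr rfl fun i _ => Finset.sum_congr rfl fun j _ => by rw [hsymmweights]
  have swap2 : ∑ i, ∑ j, xb x j ⬝ᵥ (A i j *ᵥ xb x j) = ∑ i, ∑ j, xb x i ⬝ᵥ (A i j *ᵥ xb x i) := by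
    rw [Finset.sum_comm]
    exact Finset.sum_congr rfl fun i _ => Finset.sum_congr rfl fun j _ => by rw [hsymmweights]
  have key : (2:ℝ) * (x ⬝ᵥ (L *ᵥ x))
      = ∑ i, ∑ j, (xb x i - xb x j) ⬝ᵥ (A i j *ᵥ (xb x i - xb x j)) := by
    rw [L_quad A L hdiag hL x]
    simp only [Matrix.mulVec_sub, dotProduct_sub, sub_dotProduct,
      Finset.sum_sub_distrib]
    rw [swap1, swap2]
    ring
  nlinarith [Finset.sum_nonneg (fun i (_ : i ∈ Finset.univ) => Finset.sum_nonneg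
    (fun j (_ : j ∈ Finset.univ) => psdq i j (xb x i - xb x j)))]

private lemma L_quad_le (hdiag : ∀ i, A i i = 0)
    (hsymmweights : ∀ i j, A i j = A j i)
    (hpsd : ∀ i j, (A i j).PosSemidef)
    (hL : ∀ p q : Fin n × Fin d,
      L p q = if p.1 = q.1 then (∑ k, A p.1 k) p.2 q.2 else -(A p.1 q.1 p.2 q.2))
    (x : Fin n × Fin d → ℝ) :
    x ⬝ᵥ (L *ᵥ x) ≤ 2 * ∑ i, ‖Matrix.toEuclideanCLM (𝕜 := ℝ) (∑ k, A i k)‖ * (xb x i ⬝ᵥ xb x i) := by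
  classical
  have psdq : ∀ (i j) (v : Fin d → ℝ), 0 ≤ v ⬝ᵥ (A i j *ᵥ v) := by
    intro i j v; simpa using (hpsd i j).re_dotProduct_nonneg v
  have swap1 : ∑ i, ∑ j, xb x j ⬝ᵥ (A i j *ᵥ xb x i) = ∑ i, ∑ j, xb x i ⬝ᵥ (A i j *ᵥ xb x j) := by
    rw [Finset.sum_comm]
    exact Finset.sum_congr rfl fun i _ => Finset.sum_congr rfl fun j _ => by rw [hsymmweights]
  have swap2 : ∑ i, ∑ j, xb x j ⬝ᵥ (A i j *ᵥ xb x j) = ∑ i, ∑ j, xb x i ⬝ᵥ (A i j *ᵥ xb x i) := by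
    rw [Finset.sum_comm]
    exact Finset.sum_congr rfl fun i _ => Finset.sum_congr rfl fun j _ => by rw [hsymmweights]
  have key : (2:ℝ) * (x ⬝ᵥ (L *ᵥ x))
      = 4 * (∑ i, ∑ j, xb x i ⬝ᵥ (A i j *ᵥ xb x i))
        - ∑ i, ∑ j, (xb x i + xb x j) ⬝ᵥ (A i j *ᵥ (xb x i + xb x j)) := by
    rw [L_quad A L hdiag hL x]
    simp only [Matrix.mulVec_add, dotProduct_add, add_dotProduct,
      Finset.sum_add_distrib, Finset.sum_sub_distrib]
    rw [swap1, swap2]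
    ring
  have hplus : 0 ≤ ∑ i, ∑ j, (xb x i + xb x j) ⬝ᵥ (A i j *ᵥ (xb x i + xb x j)) :=
    Finset.sum_nonneg fun i _ => Finset.sum_nonneg fun j _ => psdq i j _
  have hD : ∀ i : Fin n, ∑ j, xb x i ⬝ᵥ (A i j *ᵥ xb x i)
      ≤ ‖Matrix.toEuclideanCLM (𝕜 := ℝ) (∑ k, A i k)‖ * (xb x i ⬝ᵥ xb x i) := by
    intro i
    have := opnorm_quad (∑ k, A i k) (xb x i)
    rwa [dot_sum_mulVec] at this
  have hsum : ∑ i, ∑ j, xb x i ⬝ᵥ (A i j *ᵥ xb x i)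
      ≤ ∑ i, ‖Matrix.toEuclideanCLM (𝕜 := ℝ) (∑ k, A i k)‖ * (xb x i ⬝ᵥ xb x i) :=
    Finset.sum_le_sum fun i _ => hD i
  nlinarith

private lemma consensus_in_ker (hdiag : ∀ i, A i i = 0)
    (hL : ∀ p q : Fin n × Fin d,
      L p q = if p.1 = q.1 then (∑ k, A p.1 k) p.2 q.2 else -(A p.1 q.1 p.2 q.2))
    (w : Fin d → ℝ) :
    L *ᵥ (fun p : Fin n × Fin d => w p.2) = 0 := by
  classical
  funext p
  rw [block_mulVec (fun i j => (if i = j then ∑ k, A i k else 0) - A i j) L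
    (L_block A L hdiag hL) (fun p : Fin n × Fin d => w p.2) p]
  have h1 : ∀ j : Fin n,
      ((((if p.1 = j then ∑ k, A p.1 k else 0) - A p.1 j) : Matrix (Fin d) (Fin d) ℝ) *ᵥ
        (fun b => w b)) p.2
      = (if p.1 = j then ((∑ k, A p.1 k) *ᵥ w) p.2 else 0) - (A p.1 j *ᵥ w) p.2 := by
    intro j
    by_cases hj : p.1 = j <;>
      simp [Matrix.sub_mulVec, Matrix.neg_mulVec, Pi.neg_apply, hj]
  rw [Finset.sum_congr rfl (fun j _ => h1 j), Finset.sum_sub_distrib,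
    Finset.sum_ite_eq Finset.univ p.1 (fun _ => ((∑ k, A p.1 k) *ᵥ w) p.2),
    if_pos (Finset.mem_univ p.1), sum_mulVec_apply]
  simp

end ConsensusAux
/-- For a symmetric matrix-weight assignment with Laplacian `L`, step
sizes `α_i = (‖D_i‖ + β_i)⁻¹` with `β_i > 0`, and `G⁻¹ = diag(α_1 I_d, …, α_n I_d)`,
the iteration `x(k+1) = (I − G⁻¹ L) x(k)` drives every initial condition to a
consensus vector iff the null space of `L` equals the consensus space. -/
theorem consensus_iff_null_space_of_L
    (n d : ℕ) (hn : 1 ≤ n) (hd : 1 ≤ d)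
    (A : Fin n → Fin n → Matrix (Fin d) (Fin d) ℝ)
    (hdiag : ∀ i, A i i = 0)
    (hsymmweights : ∀ i j, A i j = A j i)
    (hpsd : ∀ i j, (A i j).PosSemidef)
    (L : Matrix (Fin n × Fin d) (Fin n × Fin d) ℝ)
    (hL : ∀ p q : Fin n × Fin d,
      L p q = if p.1 = q.1 then (∑ k, A p.1 k) p.2 q.2 else -(A p.1 q.1 p.2 q.2))
    (β α : Fin n → ℝ) (hβ : ∀ i, 0 < β i)
    (hα : ∀ i, α i = (‖Matrix.toEuclideanCLM (𝕜 := ℝ) (∑ k, A i k)‖ + β i)⁻¹)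
    (Ginv : Matrix (Fin n × Fin d) (Fin n × Fin d) ℝ)
    (hGinv : ∀ p q : Fin n × Fin d, Ginv p q = if p = q then α p.1 else 0) :
    (∀ x0 : Fin n × Fin d → ℝ,
      ∃ xhat : Fin d → ℝ,
        Tendsto
          (fun k : ℕ => (((1 : Matrix (Fin n × Fin d) (Fin n × Fin d) ℝ) - Ginv * L) ^ k).mulVec x0)
          atTop (nhds (fun p : Fin n × Fin d => xhat p.2))) ↔
    (∀ v : Fin n × Fin d → ℝ,
      L.mulVec v = 0 ↔ ∃ w : Fin d → ℝ, v = fun p : Fin n × Fin d => w p.2) := by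
  classical
  set M : Matrix (Fin n × Fin d) (Fin n × Fin d) ℝ :=
    (1 : Matrix (Fin n × Fin d) (Fin n × Fin d) ℝ) - Ginv * L with hMdef
  have hα_pos : ∀ i, 0 < α i := by
    intro i
    rw [hα]
    have := hβ i
    have := norm_nonneg (Matrix.toEuclideanCLM (𝕜 := ℝ) (∑ k, A i k))
    positivity
  have hαinv : ∀ i, (α i)⁻¹ = ‖Matrix.toEuclideanCLM (𝕜 := ℝ) (∑ k, A i k)‖ + β i := by
    intro i; rw [hα, inv_inv]
  set sα : Fin n → ℝ := fun i => Real.sqrt (α i) with hsα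
  have hsα_pos : ∀ i, 0 < sα i := fun i => Real.sqrt_pos.mpr (hα_pos i)
  have hsα_sq : ∀ i, sα i * sα i = α i := fun i => Real.mul_self_sqrt (hα_pos i).le
  set Q : Matrix (Fin n × Fin d) (Fin n × Fin d) ℝ :=
    Matrix.diagonal (fun p : Fin n × Fin d => sα p.1) with hQ
  set Qi : Matrix (Fin n × Fin d) (Fin n × Fin d) ℝ :=
    Matrix.diagonal (fun p : Fin n × Fin d => (sα p.1)⁻¹) with hQi
  have hQQi : Q * Qi = 1 := by
    rw [hQ, hQi, Matrix.diagonal_mul_diagonal]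
    rw [show (fun p : Fin n × Fin d => sα p.1 * (sα p.1)⁻¹) = fun _ => 1 from
      funext fun p => mul_inv_cancel₀ (hsα_pos p.1).ne']
    exact Matrix.diagonal_one
  have hQiQ : Qi * Q = 1 := by
    rw [hQ, hQi, Matrix.diagonal_mul_diagonal]
    rw [show (fun p : Fin n × Fin d => (sα p.1)⁻¹ * sα p.1) = fun _ => 1 from
      funext fun p => inv_mul_cancel₀ (hsα_pos p.1).ne']
    exact Matrix.diagonal_one
  have hGinvD : Ginv = Matrix.diagonal (fun p : Fin n × Fin d => α p.1) := by
    ext p q; rw [hGinv, Matrix.diagonal_apply]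
  have hQQ : Q * Q = Matrix.diagonal (fun p : Fin n × Fin d => α p.1) := by
    rw [hQ, Matrix.diagonal_mul_diagonal]
    exact congrArg _ (funext fun p => hsα_sq p.1)
  set S : Matrix (Fin n × Fin d) (Fin n × Fin d) ℝ := 1 - Q * L * Q with hS
  have hMQSQ : M = Q * S * Qi := by
    have : Q * S * Qi = M := by
      calc Q * (1 - Q * L * Q) * Qi
          = Q * Qi - Q * Q * L * (Q * Qi) := by noncomm_ring
        _ = 1 - Ginv * L := by rw [hQQi, hQQ, ← hGinvD, mul_one]
    exact this.symm
  -- symmetry of L and S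
  have hLsym : ∀ p q : Fin n × Fin d, L p q = L q p := by
    intro p q
    rw [hL, hL]
    by_cases h : p.1 = q.1
    · rw [if_pos h, if_pos h.symm, ← h, Matrix.sum_apply, Matrix.sum_apply]
      refine Finset.sum_congr rfl fun k _ => ?_
      simpa using ((hpsd p.1 k).1.apply p.2 q.2).symm
    · rw [if_neg h, if_neg fun hh => h hh.symm, hsymmweights]
      have := (hpsd q.1 p.1).1.apply p.2 q.2
      simp only [star_trivial] at this
      rw [this]
  have hLherm : L.IsHermitian := Matrix.ext fun p q => by
    rw [Matrix.conjTranspose_apply, star_trivial]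
    exact hLsym q p
  have hQherm : Q.IsHermitian := Matrix.isHermitian_diagonal _
  have hSherm : S.IsHermitian := by
    have hW : (Q * L * Q).IsHermitian := by
      show (Q * L * Q)ᴴ = Q * L * Q
      rw [Matrix.conjTranspose_mul, Matrix.conjTranspose_mul, hQherm.eq, hLherm.eq]
      rw [Matrix.mul_assoc]
    exact Matrix.isHermitian_one.sub hW
  -- quadratic facts about W := Q * L * Q
  have hdotQ : ∀ v w : Fin n × Fin d → ℝ, v ⬝ᵥ (Q *ᵥ w) = (Q *ᵥ v) ⬝ᵥ w := by
    intro v w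
    simp only [dotProduct, hQ, diag_mulVec_apply]
    exact Finset.sum_congr rfl fun p _ => by ring
  have hWq : ∀ v : Fin n × Fin d → ℝ,
      v ⬝ᵥ ((Q * L * Q) *ᵥ v) = (Q *ᵥ v) ⬝ᵥ (L *ᵥ (Q *ᵥ v)) := by
    intro v
    rw [← Matrix.mulVec_mulVec, ← Matrix.mulVec_mulVec, hdotQ]
  have hW0 : ∀ v : Fin n × Fin d → ℝ, 0 ≤ v ⬝ᵥ ((Q * L * Q) *ᵥ v) := by
    intro v
    rw [hWq]
    exact L_quad_nonneg A L hdiag hsymmweights hpsd hL (Q *ᵥ v)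
  have hW2 : ∀ v : Fin n × Fin d → ℝ, v ≠ 0 → v ⬝ᵥ ((Q * L * Q) *ᵥ v) < 2 * (v ⬝ᵥ v) := by
    intro v hv
    rw [hWq]
    set u : Fin n × Fin d → ℝ := Q *ᵥ v with hu
    have hub : ∀ (i : Fin n) (a : Fin d), xb u i a = sα i * v (i, a) := by
      intro i a
      show u (i, a) = _
      rw [hu, hQ, diag_mulVec_apply]
    have hubdot : ∀ i : Fin n, xb u i ⬝ᵥ xb u i = α i * (xb v i ⬝ᵥ xb v i) := by
      intro i
      simp only [dotProduct, hub, Finset.mul_sum]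
      refine Finset.sum_congr rfl fun a _ => ?_
      have := hsα_sq i
      show (sα i * v (i, a)) * (sα i * v (i, a)) = α i * (xb v i a * xb v i a)
      rw [show xb v i a = v (i, a) from rfl]
      nlinarith [hsα_sq i]
    have hvblock : ∑ i, xb v i ⬝ᵥ xb v i = v ⬝ᵥ v := by
      simp only [dotProduct, Fintype.sum_prod_type]
      rfl
    obtain ⟨p₀, hp₀⟩ := Function.ne_iff.mp hv
    have hxbne : xb v p₀.1 ≠ 0 := by
      intro hzero
      exact hp₀ (by simpa [xb] using congrFun hzero p₀.2)
    have step1 := L_quad_le A L hdiag hsymmweights hpsd hL u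
    have step2 : ∑ i, ‖Matrix.toEuclideanCLM (𝕜 := ℝ) (∑ k, A i k)‖ * (xb u i ⬝ᵥ xb u i)
        < ∑ i, (α i)⁻¹ * (xb u i ⬝ᵥ xb u i) := by
      refine Finset.sum_lt_sum (fun i _ => ?_) ⟨p₀.1, Finset.mem_univ _, ?_⟩
      · rw [hαinv]
        have := (hβ i).le
        have := dot_self_nonneg (xb u i)
        nlinarith
      · rw [hαinv]
        have hpos : 0 < xb u p₀.1 ⬝ᵥ xb u p₀.1 := by
          rw [hubdot]
          exact mul_pos (hα_pos _) (dot_self_pos hxbne)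
        nlinarith [hβ p₀.1]
    have step3 : ∑ i, (α i)⁻¹ * (xb u i ⬝ᵥ xb u i) = v ⬝ᵥ v := by
      rw [← hvblock]
      refine Finset.sum_congr rfl fun i _ => ?_
      rw [hubdot, ← mul_assoc, inv_mul_cancel₀ (hα_pos i).ne', one_mul]
    calc u ⬝ᵥ (L *ᵥ u)
        ≤ 2 * ∑ i, ‖Matrix.toEuclideanCLM (𝕜 := ℝ) (∑ k, A i k)‖ * (xb u i ⬝ᵥ xb u i) := step1
      _ < 2 * ∑ i, (α i)⁻¹ * (xb u i ⬝ᵥ xb u i) := by linarith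
      _ = 2 * (v ⬝ᵥ v) := by rw [step3]
  -- eigenvalue bounds
  have hQLQ : Q * L * Q = 1 - S := by rw [hS, sub_sub_cancel]
  have heigbound : ∀ j : Fin n × Fin d, -1 < hSherm.eigenvalues j ∧ hSherm.eigenvalues j ≤ 1 := by
    intro j
    set v : Fin n × Fin d → ℝ := ⇑(hSherm.eigenvectorBasis j) with hv
    have hv1 : v ⬝ᵥ v = 1 := by
      have hnorm : ‖hSherm.eigenvectorBasis j‖ = 1 := hSherm.eigenvectorBasis.orthonormal.1 j
      have : v ⬝ᵥ v = (inner ℝ (hSherm.eigenvectorBasis j) (hSherm.eigenvectorBasis j) : ℝ) := by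
        simp only [hv, PiLp.inner_apply, RCLike.inner_apply, dotProduct]
        simp
      rw [this, real_inner_self_eq_norm_sq, hnorm, one_pow]
    have hvne : v ≠ 0 := by
      intro hzero
      rw [hzero] at hv1
      simp at hv1
    have hSv : S *ᵥ v = hSherm.eigenvalues j • v := hSherm.mulVec_eigenvectorBasis j
    have vSv : v ⬝ᵥ (S *ᵥ v) = hSherm.eigenvalues j := by
      rw [hSv, dotProduct_smul, smul_eq_mul, hv1, mul_one]
    have vWv : v ⬝ᵥ ((Q * L * Q) *ᵥ v) = 1 - hSherm.eigenvalues j := by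
      rw [hQLQ, Matrix.sub_mulVec, Matrix.one_mulVec, dotProduct_sub, hv1, vSv]
    constructor
    · have := hW2 v hvne
      rw [vWv, hv1] at this
      linarith
    · have := hW0 v
      rw [vWv] at this
      linarith
  -- limits of powers of S
  set U : Matrix (Fin n × Fin d) (Fin n × Fin d) ℝ :=
    (hSherm.eigenvectorUnitary : Matrix (Fin n × Fin d) (Fin n × Fin d) ℝ) with hU
  set lam : Fin n × Fin d → ℝ := hSherm.eigenvalues with hlam
  set mu : Fin n × Fin d → ℝ := fun i => if lam i = 1 then 1 else 0 with hmu
  have hpowlim : ∀ i, Tendsto (fun k : ℕ => lam i ^ k) atTop (nhds (mu i)) := by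
    intro i
    by_cases h : lam i = 1
    · rw [hmu]
      simp only [h, one_pow, if_pos rfl]
      exact tendsto_const_nhds
    · have habs : |lam i| < 1 :=
        abs_lt.mpr ⟨(heigbound i).1, lt_of_le_of_ne (heigbound i).2 h⟩
      rw [hmu]
      simp only [if_neg h]
      exact tendsto_pow_atTop_nhds_zero_iff.mpr habs
  have hSk : ∀ (k : ℕ) (p q : Fin n × Fin d),
      (S ^ k) p q = ∑ i, U p i * (lam i ^ k * U q i) := by
    intro k p q
    rw [pow_spec S hSherm k, Matrix.mul_apply]
    simp only [Matrix.mul_diagonal, Matrix.star_apply, star_trivial]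
    refine Finset.sum_congr rfl fun i _ => ?_
    ring
  set Tm : Matrix (Fin n × Fin d) (Fin n × Fin d) ℝ :=
    Matrix.of (fun p q => ∑ i, U p i * (mu i * U q i)) with hTm
  have hSlim : ∀ p q, Tendsto (fun k : ℕ => (S ^ k) p q) atTop (nhds (Tm p q)) := by
    intro p q
    simp only [hSk]
    exact tendsto_finset_sum _ fun i _ => ((hpowlim i).mul_const (U q i)).const_mul (U p i)
  have hMk : ∀ k : ℕ, M ^ k = Q * S ^ k * Qi := by
    intro k
    induction k with
    | zero => rw [pow_zero, pow_zero, mul_one, hQQi]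
    | succ k ih =>
        calc M ^ (k+1) = M ^ k * M := pow_succ M k
          _ = (Q * S ^ k * Qi) * (Q * S * Qi) := by rw [ih, hMQSQ]
          _ = Q * (S ^ k * ((Qi * Q) * (S * Qi))) := by simp only [Matrix.mul_assoc]
          _ = Q * (S ^ k * (S * Qi)) := by rw [hQiQ, one_mul]
          _ = Q * S ^ (k+1) * Qi := by rw [pow_succ]; simp only [Matrix.mul_assoc]
  have hMent : ∀ (B : Matrix (Fin n × Fin d) (Fin n × Fin d) ℝ) (p q : Fin n × Fin d),
      (Q * B * Qi) p q = sα p.1 * (B p q * (sα q.1)⁻¹) := by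
    intro B p q
    rw [hQ, hQi, Matrix.mul_diagonal, Matrix.diagonal_mul, mul_assoc]
  have hMconv : ∀ p q, Tendsto (fun k : ℕ => (M ^ k) p q) atTop (nhds ((Q * Tm * Qi) p q)) := by
    intro p q
    simp only [hMk, hMent]
    exact (((hSlim p q).mul_const _).const_mul _)
  -- the key existence-of-limit fact
  have key : ∀ x0 : Fin n × Fin d → ℝ, ∃ y : Fin n × Fin d → ℝ,
      Tendsto (fun k : ℕ => (M ^ k) *ᵥ x0) atTop (nhds y) ∧ L *ᵥ y = 0 := by
    intro x0
    set y : Fin n × Fin d → ℝ := (Q * Tm * Qi) *ᵥ x0 with hy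
    have hconv : Tendsto (fun k : ℕ => (M ^ k) *ᵥ x0) atTop (nhds y) := by
      rw [tendsto_pi_nhds]
      intro p
      simp only [Matrix.mulVec, dotProduct]
      exact tendsto_finset_sum _ fun q _ => (hMconv p q).mul_const (x0 q)
    refine ⟨y, hconv, ?_⟩
    have h1 : Tendsto (fun k : ℕ => (M ^ (k+1)) *ᵥ x0) atTop (nhds y) :=
      hconv.comp (tendsto_add_atTop_nat 1)
    have h2 : Tendsto (fun k : ℕ => (M ^ (k+1)) *ᵥ x0) atTop (nhds (M *ᵥ y)) := by
      have heq : ∀ k : ℕ, (M ^ (k+1)) *ᵥ x0 = M *ᵥ ((M ^ k) *ᵥ x0) := by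
        intro k
        rw [Matrix.mulVec_mulVec, ← pow_succ']
      rw [funext heq, tendsto_pi_nhds]
      intro p
      simp only [Matrix.mulVec, dotProduct]
      exact tendsto_finset_sum _ fun q _ =>
        (tendsto_pi_nhds.mp hconv q).const_mul (M p q)
    have hMy : M *ᵥ y = y := tendsto_nhds_unique h2 h1
    have hsub : y - Ginv *ᵥ (L *ᵥ y) = y := by
      rw [Matrix.mulVec_mulVec]
      calc y - (Ginv * L) *ᵥ y = (1 - Ginv * L) *ᵥ y := by
            rw [Matrix.sub_mulVec, Matrix.one_mulVec]
        _ = y := hMy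
    have hzero : Ginv *ᵥ (L *ᵥ y) = 0 := by
      have := sub_eq_self.mp hsub
      exact this
    funext p
    have := congrFun hzero p
    rw [hGinvD, diag_mulVec_apply] at this
    have h0 : α p.1 * (L *ᵥ y) p = 0 := this
    have := mul_eq_zero.mp h0
    rcases this with h | h
    · exact absurd h (hα_pos p.1).ne'
    · exact h
  constructor
  · intro hconvAll v
    constructor
    · intro hLv
      have hMv : M *ᵥ v = v := by
        rw [hMdef, Matrix.sub_mulVec, Matrix.one_mulVec, ← Matrix.mulVec_mulVec, hLv,
          Matrix.mulVec_zero, sub_zero]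
      have hMkv : ∀ k : ℕ, (M ^ k) *ᵥ v = v := by
        intro k
        induction k with
        | zero => rw [pow_zero, Matrix.one_mulVec]
        | succ k ih => rw [pow_succ', ← Matrix.mulVec_mulVec, ih, hMv]
      obtain ⟨xhat, hx⟩ := hconvAll v
      have h1 : Tendsto (fun k : ℕ => (M ^ k) *ᵥ v) atTop (nhds v) := by
        simp only [hMkv]
        exact tendsto_const_nhds
      exact ⟨xhat, tendsto_nhds_unique h1 hx⟩
    · rintro ⟨w, rfl⟩
      exact consensus_in_ker A L hdiag hL w
  · intro hker x0
    obtain ⟨y, hy, hLy⟩ := key x0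
    obtain ⟨w, rfl⟩ := (hker y).mp hLy
    exact ⟨w, hy⟩
end

section
/- Let (A_{ij}) be a symmetric matrix-weight assignment with matrix-weighted Laplacian L. Let β > 0 and set the common step size α = (max_{1≤i≤n} ‖D_i‖ + β)⁻¹, where ‖D_i‖ is the operator 2-norm of D_i. Consider the iteration x(k+1) = (I_{nd} − αL) x(k). Then the following are equivalent: (a) for every initial vector x(0) ∈ ℝ^{nd}, x(k) converges as k → ∞ to the average consensus 1_n ⊗ x̄, where x̄ = (1/n) Σ_{i=1}^n x_i(0); (b) the null space of L equals the consensus space range(1_n ⊗ I_d). -/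
open Matrix BigOperators Filter

lemma dot_symm {m : Type*} [Fintype m] (B : Matrix m m ℝ) (hB : ∀ a b, B a b = B b a)
    (u w : m → ℝ) : u ⬝ᵥ (B *ᵥ w) = w ⬝ᵥ (B *ᵥ u) := by
  simp only [dotProduct, mulVec, Finset.mul_sum]
  rw [Finset.sum_comm]
  exact Finset.sum_congr rfl fun b _ => Finset.sum_congr rfl fun a _ => by rw [hB a b]; ring

lemma dot_le_opNorm {m : Type*} [Fintype m] [DecidableEq m] (Mx : Matrix m m ℝ) (x : m → ℝ) :
    x ⬝ᵥ (Mx *ᵥ x) ≤ ‖Matrix.toEuclideanCLM (𝕜 := ℝ) Mx‖ * (x ⬝ᵥ x) := by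
  set y : EuclideanSpace ℝ m := (WithLp.equiv 2 _).symm x with hy
  have h1 : x ⬝ᵥ (Mx *ᵥ x) = inner ℝ y (Matrix.toEuclideanCLM (𝕜 := ℝ) Mx y) := by
    rw [EuclideanSpace.inner_eq_star_dotProduct]
    simp [hy, Matrix.toLin'_apply, dotProduct, mulVec]
    exact Finset.sum_congr rfl fun _ _ => mul_comm _ _
  have h2 : x ⬝ᵥ x = inner ℝ y y := by
    rw [EuclideanSpace.inner_eq_star_dotProduct]
    simp [hy, dotProduct]
  rw [h1, h2, real_inner_self_eq_norm_mul_norm]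
  calc inner ℝ y (Matrix.toEuclideanCLM (𝕜 := ℝ) Mx y)
      ≤ ‖y‖ * ‖Matrix.toEuclideanCLM (𝕜 := ℝ) Mx y‖ := real_inner_le_norm _ _
    _ ≤ ‖y‖ * (‖Matrix.toEuclideanCLM (𝕜 := ℝ) Mx‖ * ‖y‖) := by
        exact mul_le_mul_of_nonneg_left (ContinuousLinearMap.le_opNorm _ _) (norm_nonneg _)
    _ = ‖Matrix.toEuclideanCLM (𝕜 := ℝ) Mx‖ * (‖y‖ * ‖y‖) := by ring



/-- For a symmetric matrix-weight assignment with Laplacian `L` and a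
common step size `α = (max_i ‖D_i‖ + β)⁻¹`, `β > 0`, the iteration
`x(k+1) = (I − α L) x(k)` drives every initial condition to the average consensus
`1_n ⊗ x̄`, `x̄ = (1/n) ∑_i x_i(0)`, iff the null space of `L` equals the consensus
space. -/
theorem average_consensus_iff_null_space_of_L
    (n d : ℕ) (hn : 1 ≤ n) (hd : 1 ≤ d)
    (A : Fin n → Fin n → Matrix (Fin d) (Fin d) ℝ)
    (hdiag : ∀ i, A i i = 0)
    (hsymmweights : ∀ i j, A i j = A j i)
    (hpsd : ∀ i j, (A i j).PosSemidef)
    (L : Matrix (Fin n × Fin d) (Fin n × Fin d) ℝ)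
    (hL : ∀ p q : Fin n × Fin d,
      L p q = if p.1 = q.1 then (∑ k, A p.1 k) p.2 q.2 else -(A p.1 q.1 p.2 q.2))
    (β : ℝ) (hβ : 0 < β) (α : ℝ)
    (hα : α = (Finset.univ.sup' (Finset.univ_nonempty_iff.mpr ⟨⟨0, hn⟩⟩)
        (fun i : Fin n => ‖Matrix.toEuclideanCLM (𝕜 := ℝ) (∑ k, A i k)‖) + β)⁻¹) :
    (∀ x0 : Fin n × Fin d → ℝ,
      Tendsto
        (fun k : ℕ => (((1 : Matrix (Fin n × Fin d) (Fin n × Fin d) ℝ) - α • L) ^ k).mulVec x0)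
        atTop (nhds (fun p : Fin n × Fin d => (∑ i : Fin n, x0 (i, p.2)) / (n : ℝ)))) ↔
    (∀ v : Fin n × Fin d → ℝ,
      L.mulVec v = 0 ↔ ∃ w : Fin d → ℝ, v = fun p : Fin n × Fin d => w p.2) := by
  have hLv : ∀ (x : Fin n × Fin d → ℝ) (i : Fin n) (a : Fin d),
      (L *ᵥ x) (i, a) = ∑ j, ∑ b, A i j a b * (x (i, b) - x (j, b)) := by
    intro x i a
    have hent : ∀ (j : Fin n) (b : Fin d),
        L (i, a) (j, b) = (if j = i then ∑ k, A i k a b else 0) - A i j a b := by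
      intro j b
      rw [hL]
      by_cases h : i = j
      · subst h
        simp [Matrix.sum_apply, hdiag i]
      · simp [h, Ne.symm h]
    calc (L *ᵥ x) (i, a) = ∑ j, ∑ b, L (i, a) (j, b) * x (j, b) := by
          simp [mulVec, dotProduct, Fintype.sum_prod_type]
      _ = ∑ j, ∑ b, (((if j = i then ∑ k, A i k a b else 0) * x (j, b))
            - A i j a b * x (j, b)) := by
          refine Finset.sum_congr rfl fun j _ => Finset.sum_congr rfl fun b _ => ?_
          rw [hent j b]; ring
      _ = ∑ j, ∑ b, A i j a b * (x (i, b) - x (j, b)) := by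
          rw [Finset.sum_congr rfl fun j (_ : j ∈ Finset.univ) => Finset.sum_sub_distrib _ _,
            Finset.sum_sub_distrib]
          have h1 : ∑ j, ∑ b, (if j = i then ∑ k, A i k a b else 0) * x (j, b)
              = ∑ j, ∑ b, A i j a b * x (i, b) := by
            rw [Finset.sum_comm]
            simp only [Finset.sum_ite_eq', Finset.mem_univ, if_true, ite_mul, zero_mul]
            rw [Finset.sum_comm]
            exact Finset.sum_congr rfl fun b _ => Finset.sum_mul _ _ _
          rw [h1, ← Finset.sum_sub_distrib]
          refine Finset.sum_congr rfl fun j _ => ?_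
          rw [← Finset.sum_sub_distrib]
          refine Finset.sum_congr rfl fun b _ => by ring
  -- consensus vectors are in the kernel
  have hcons : ∀ w : Fin d → ℝ, L *ᵥ (fun p : Fin n × Fin d => w p.2) = 0 := by
    intro w
    funext p
    obtain ⟨i, a⟩ := p
    rw [hLv (fun p => w p.2) i a]
    simp
  -- entrywise symmetry of each A i j
  have hAsym : ∀ (i j : Fin n) (a b : Fin d), A i j a b = A i j b a := by
    intro i j a b
    conv_lhs => rw [← (hpsd i j).1]
    simp [Matrix.conjTranspose_apply]
  -- symmetry of L
  have hsymL : ∀ p q, L p q = L q p := by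
    rintro ⟨i, a⟩ ⟨j, b⟩
    rw [hL, hL]
    by_cases h : i = j
    · subst h
      simp only [if_pos rfl]
      simp [Matrix.sum_apply]
      exact Finset.sum_congr rfl fun k _ => hAsym i k a b
    · simp only [if_neg h, if_neg (Ne.symm h)]
      rw [hsymmweights i j, hAsym j i a b]
  have hH : L.IsHermitian := by
    ext p q
    simp only [Matrix.conjTranspose_apply, star_trivial]
    exact hsymL q p
  set M : ℝ := Finset.univ.sup' (Finset.univ_nonempty_iff.mpr ⟨⟨0, hn⟩⟩)
      (fun i : Fin n => ‖Matrix.toEuclideanCLM (𝕜 := ℝ) (∑ k, A i k)‖) with hM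
  -- quadratic form identity
  have hquad : ∀ x : Fin n × Fin d → ℝ, x ⬝ᵥ (L *ᵥ x) =
      ∑ i, ∑ j, (fun a => x (i, a)) ⬝ᵥ
        ((A i j) *ᵥ ((fun b => x (i, b)) - (fun b => x (j, b)))) := by
    intro x
    calc x ⬝ᵥ (L *ᵥ x) = ∑ i, ∑ a, x (i, a) * (L *ᵥ x) (i, a) := by
          simp [dotProduct, Fintype.sum_prod_type]
      _ = ∑ i, ∑ a, x (i, a) * ∑ j, ∑ b, A i j a b * (x (i, b) - x (j, b)) := by
          exact Finset.sum_congr rfl fun i _ => Finset.sum_congr rfl fun a _ => by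
            rw [hLv x i a]
      _ = ∑ i, ∑ j, (fun a => x (i, a)) ⬝ᵥ
            ((A i j) *ᵥ ((fun b => x (i, b)) - (fun b => x (j, b)))) := by
          refine Finset.sum_congr rfl fun i _ => ?_
          simp only [dotProduct, mulVec, Pi.sub_apply, Finset.mul_sum]
          rw [Finset.sum_comm]
  have hswap : ∀ f : Fin n → Fin n → ℝ, (∑ i, ∑ j, f i j) = ∑ i, ∑ j, f j i := by
    intro f; exact Finset.sum_comm
  have h2quad : ∀ x : Fin n × Fin d → ℝ, 2 * (x ⬝ᵥ (L *ᵥ x)) =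
      ∑ i, ∑ j, ((fun a => x (i, a)) - (fun a => x (j, a))) ⬝ᵥ
        ((A i j) *ᵥ ((fun b => x (i, b)) - (fun b => x (j, b)))) := by
    intro x
    have h2 : x ⬝ᵥ (L *ᵥ x) = ∑ i, ∑ j, (fun a => x (j, a)) ⬝ᵥ
        ((A i j) *ᵥ ((fun b => x (j, b)) - (fun b => x (i, b)))) := by
      rw [hquad x, hswap (fun i j => (fun a => x (i, a)) ⬝ᵥ
        ((A i j) *ᵥ ((fun b => x (i, b)) - (fun b => x (j, b)))))]
      exact Finset.sum_congr rfl fun i _ => Finset.sum_congr rfl fun j _ => by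
        rw [hsymmweights j i]
    calc 2 * (x ⬝ᵥ (L *ᵥ x)) = x ⬝ᵥ (L *ᵥ x) + x ⬝ᵥ (L *ᵥ x) := by ring
      _ = ∑ i, ∑ j, ((fun a => x (i, a)) ⬝ᵥ
            ((A i j) *ᵥ ((fun b => x (i, b)) - (fun b => x (j, b))))
          + (fun a => x (j, a)) ⬝ᵥ
            ((A i j) *ᵥ ((fun b => x (j, b)) - (fun b => x (i, b))))) := by
          nth_rewrite 2 [h2]; nth_rewrite 1 [hquad x]
          rw [← Finset.sum_add_distrib]
          exact Finset.sum_congr rfl fun i _ => (Finset.sum_add_distrib).symm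
      _ = _ := by
          refine Finset.sum_congr rfl fun i _ => Finset.sum_congr rfl fun j _ => ?_
          simp only [Matrix.mulVec_sub, dotProduct_sub, sub_dotProduct]
          ring
  -- nonnegativity
  have hpsdL : L.PosSemidef := by
    refine Matrix.PosSemidef.of_dotProduct_mulVec_nonneg hH fun x => ?_
    simp only [star_trivial]
    have h := h2quad x
    have hnn : 0 ≤ ∑ i, ∑ j, ((fun a => x (i, a)) - (fun a => x (j, a))) ⬝ᵥ
        ((A i j) *ᵥ ((fun b => x (i, b)) - (fun b => x (j, b)))) := by
      refine Finset.sum_nonneg fun i _ => Finset.sum_nonneg fun j _ => ?_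
      simpa using (hpsd i j).dotProduct_mulVec_nonneg ((fun a => x (i, a)) - (fun a => x (j, a)))
    linarith
  have hMnn : ∀ i : Fin n, ‖Matrix.toEuclideanCLM (𝕜 := ℝ) (∑ k, A i k)‖ ≤ M :=
    fun i => Finset.le_sup' (fun i : Fin n => ‖Matrix.toEuclideanCLM (𝕜 := ℝ) (∑ k, A i k)‖) (Finset.mem_univ i)
  have hM0 : 0 ≤ M := le_trans (norm_nonneg _) (hMnn ⟨0, hn⟩)
  have hkey : ∀ (B : Matrix (Fin d) (Fin d) ℝ), B.PosSemidef → ∀ u v : Fin d → ℝ,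
      (u - v) ⬝ᵥ (B *ᵥ (u - v)) ≤ 2 * (u ⬝ᵥ (B *ᵥ u)) + 2 * (v ⬝ᵥ (B *ᵥ v)) := by
    intro B hB u v
    have h := hB.dotProduct_mulVec_nonneg (u + v)
    simp only [star_trivial] at h
    simp only [Matrix.mulVec_sub, dotProduct_sub, sub_dotProduct,
      Matrix.mulVec_add, dotProduct_add, add_dotProduct] at *
    linarith
  have hDi : ∀ (i : Fin n) (u : Fin d → ℝ),
      (∑ j, u ⬝ᵥ (A i j *ᵥ u)) = u ⬝ᵥ ((∑ k, A i k) *ᵥ u) := by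
    intro i u
    simp only [dotProduct, mulVec, Matrix.sum_apply, Finset.sum_mul, Finset.mul_sum]
    rw [Finset.sum_comm]
    exact Finset.sum_congr rfl fun a _ => Finset.sum_comm
  have hub : ∀ x : Fin n × Fin d → ℝ, x ⬝ᵥ (L *ᵥ x) ≤ 2 * M * (x ⬝ᵥ x) := by
    intro x
    set g : Fin n → Fin n → ℝ := fun i j =>
      (fun a => x (i, a)) ⬝ᵥ (A i j *ᵥ (fun a => x (i, a))) with hg
    have h1 : 2 * (x ⬝ᵥ (L *ᵥ x)) ≤ ∑ i, ∑ j, (2 * g i j +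
        2 * ((fun a => x (j, a)) ⬝ᵥ (A i j *ᵥ (fun a => x (j, a))))) := by
      rw [h2quad x]
      exact Finset.sum_le_sum fun i _ => Finset.sum_le_sum fun j _ =>
        hkey _ (hpsd i j) _ _
    have h2 : ∑ i, ∑ j, (2 * g i j +
        2 * ((fun a => x (j, a)) ⬝ᵥ (A i j *ᵥ (fun a => x (j, a)))))
        = 4 * ∑ i, ∑ j, g i j := by
      have hb : ∑ i, ∑ j, ((fun a => x (j, a)) ⬝ᵥ (A i j *ᵥ (fun a => x (j, a))))
          = ∑ i, ∑ j, g i j := by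
        rw [hswap (fun i j => (fun a => x (j, a)) ⬝ᵥ (A i j *ᵥ (fun a => x (j, a))))]
        exact Finset.sum_congr rfl fun i _ => Finset.sum_congr rfl fun j _ => by
          rw [hg]; rw [hsymmweights j i]
      simp only [Finset.sum_add_distrib, ← Finset.mul_sum]
      rw [hb]; ring
    have h3 : ∑ i, ∑ j, g i j ≤ M * (x ⬝ᵥ x) := by
      have hxx : (x ⬝ᵥ x) = ∑ i, ((fun a => x (i, a)) ⬝ᵥ (fun a => x (i, a))) := by
        simp [dotProduct, Fintype.sum_prod_type]
      rw [hxx, Finset.mul_sum]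
      refine Finset.sum_le_sum fun i _ => ?_
      rw [hg, hDi i]
      calc (fun a => x (i, a)) ⬝ᵥ ((∑ k, A i k) *ᵥ (fun a => x (i, a)))
          ≤ ‖Matrix.toEuclideanCLM (𝕜 := ℝ) (∑ k, A i k)‖ *
            ((fun a => x (i, a)) ⬝ᵥ (fun a => x (i, a))) := dot_le_opNorm _ _
        _ ≤ M * ((fun a => x (i, a)) ⬝ᵥ (fun a => x (i, a))) := by
            refine mul_le_mul_of_nonneg_right (hMnn i) ?_
            simpa using dotProduct_star_self_nonneg (fun a => x (i, a))
    linarith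
  have hMβ : 0 < M + β := by linarith
  have hα0 : 0 < α := by rw [hα]; exact inv_pos.mpr hMβ
  have hα2M : α * (2 * M) < 2 := by
    rw [hα, inv_mul_eq_div, div_lt_iff₀ hMβ]; linarith
  -- eigen decomposition
  set μ : Fin n × Fin d → ℝ := hH.eigenvalues with hμ
  set U : Matrix (Fin n × Fin d) (Fin n × Fin d) ℝ := ↑(hH.eigenvectorUnitary) with hUdef
  have hU1 : star U * U = 1 := by
    have := hH.eigenvectorUnitary.2
    exact (Matrix.mem_unitaryGroup_iff'.mp this)
  have hU2 : U * star U = 1 := Matrix.mem_unitaryGroup_iff.mp hH.eigenvectorUnitary.2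
  have hspec : L = U * Matrix.diagonal μ * star U := by
    have h := hH.spectral_theorem
    have : (RCLike.ofReal ∘ μ : Fin n × Fin d → ℝ) = μ := rfl
    rw [this] at h
    exact h
  have hμnn : ∀ r, 0 ≤ μ r := fun r => hpsdL.eigenvalues_nonneg r
  have hμub : ∀ r, μ r ≤ 2 * M := by
    intro r
    have hv := hH.mulVec_eigenvectorBasis r
    set v : Fin n × Fin d → ℝ := ⇑(hH.eigenvectorBasis r) with hvdef
    have hvv : v ⬝ᵥ v = 1 := by
      have hn1 : ‖hH.eigenvectorBasis r‖ = 1 := hH.eigenvectorBasis.orthonormal.1 r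
      have : (inner ℝ (hH.eigenvectorBasis r) (hH.eigenvectorBasis r) : ℝ) = v ⬝ᵥ v := by
        rw [EuclideanSpace.inner_eq_star_dotProduct]
        simp [hvdef, dotProduct]
      rw [← this, real_inner_self_eq_norm_mul_norm, hn1]; norm_num
    have h1 : v ⬝ᵥ (L *ᵥ v) = μ r := by
      rw [hv]
      simp [dotProduct_smul, hvv, hμ]
    have h2 := hub v
    rw [h1, hvv, mul_one] at h2
    exact h2
  set t : Fin n × Fin d → ℝ := fun r => 1 - α * μ r with ht
  have hconj : ∀ X Y : Matrix (Fin n × Fin d) (Fin n × Fin d) ℝ,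
      (U * X * star U) * (U * Y * star U) = U * (X * Y) * star U := by
    intro X Y
    simp only [Matrix.mul_assoc]
    rw [← Matrix.mul_assoc (star U) U, hU1, Matrix.one_mul]
  have hPt : (1 : Matrix (Fin n × Fin d) (Fin n × Fin d) ℝ) - α • L
      = U * Matrix.diagonal t * star U := by
    have h1 : (1 : Matrix (Fin n × Fin d) (Fin n × Fin d) ℝ)
        = U * Matrix.diagonal (fun _ => (1 : ℝ)) * star U := by
      rw [Matrix.diagonal_one, Matrix.mul_one, hU2]
    have h2 : α • L = U * (α • Matrix.diagonal μ) * star U := by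
      rw [hspec, Matrix.mul_smul, Matrix.smul_mul]
    have h3 : Matrix.diagonal (fun _ : Fin n × Fin d => (1 : ℝ)) - α • Matrix.diagonal μ
        = Matrix.diagonal t := by
      ext p q
      by_cases hpq : p = q
      · subst hpq; simp [ht]
      · simp [Matrix.sub_apply, Matrix.smul_apply, Matrix.diagonal_apply_ne _ hpq, Matrix.one_apply_ne hpq]
    rw [h2]
    nth_rewrite 1 [h1]
    rw [← Matrix.sub_mul, ← Matrix.mul_sub, h3]
  have hPk : ∀ k : ℕ, ((1 : Matrix (Fin n × Fin d) (Fin n × Fin d) ℝ) - α • L) ^ k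
      = U * Matrix.diagonal (fun r => t r ^ k) * star U := by
    intro k
    induction k with
    | zero =>
      simp only [pow_zero, pow_zero]
      have : (Matrix.diagonal (fun _ : Fin n × Fin d => (1 : ℝ))) = 1 := Matrix.diagonal_one
      rw [show (fun r : Fin n × Fin d => (1 : ℝ)) = (fun _ => (1 : ℝ)) from rfl, this,
        Matrix.mul_one, hU2]
    | succ k ih =>
      rw [pow_succ, ih, hPt, hconj, Matrix.diagonal_mul_diagonal]
      simp [pow_succ]
  classical
  set χ : Fin n × Fin d → ℝ := fun r => if μ r = 0 then 1 else 0 with hχ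
  set Pi0 : Matrix (Fin n × Fin d) (Fin n × Fin d) ℝ := U * Matrix.diagonal χ * star U
    with hPi0
  have htabs : ∀ r, μ r ≠ 0 → |t r| < 1 := by
    intro r hr
    have h1 : 0 < μ r := lt_of_le_of_ne (hμnn r) (Ne.symm hr)
    have h2 : α * μ r ≤ α * (2 * M) := mul_le_mul_of_nonneg_left (hμub r) hα0.le
    rw [abs_lt, ht]
    constructor <;> simp only
    · linarith
    · have : 0 < α * μ r := mul_pos hα0 h1
      linarith
  have hlim : ∀ x0 : Fin n × Fin d → ℝ,
      Tendsto (fun k : ℕ =>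
        (((1 : Matrix (Fin n × Fin d) (Fin n × Fin d) ℝ) - α • L) ^ k) *ᵥ x0)
        atTop (nhds (Pi0 *ᵥ x0)) := by
    intro x0
    rw [tendsto_pi_nhds]
    intro p
    set y : Fin n × Fin d → ℝ := star U *ᵥ x0 with hy
    have hexp : ∀ k : ℕ,
        ((((1 : Matrix (Fin n × Fin d) (Fin n × Fin d) ℝ) - α • L) ^ k) *ᵥ x0) p
        = ∑ r, U p r * (t r ^ k * y r) := by
      intro k
      have hz : Matrix.diagonal (fun r => t r ^ k) *ᵥ y = fun r => t r ^ k * y r := by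
        funext r; rw [Matrix.mulVec_diagonal]
      rw [hPk k, ← Matrix.mulVec_mulVec, ← Matrix.mulVec_mulVec, ← hy, hz]
      simp [Matrix.mulVec, dotProduct]
    have hexp0 : (Pi0 *ᵥ x0) p = ∑ r, U p r * (χ r * y r) := by
      have hz : Matrix.diagonal χ *ᵥ y = fun r => χ r * y r := by
        funext r; rw [Matrix.mulVec_diagonal]
      rw [hPi0, ← Matrix.mulVec_mulVec, ← Matrix.mulVec_mulVec, ← hy, hz]
      simp [Matrix.mulVec, dotProduct]
    simp only [hexp, hexp0]
    apply tendsto_finset_sum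
    intro r _
    by_cases hr : μ r = 0
    · have htr : t r = 1 := by rw [ht]; simp [hr]
      have hχr : χ r = 1 := by rw [hχ]; simp [hr]
      simp only [htr, hχr, one_pow]
      exact tendsto_const_nhds
    · have hχr : χ r = 0 := by rw [hχ]; simp [hr]
      have h0 : Tendsto (fun k : ℕ => t r ^ k) atTop (nhds 0) :=
        tendsto_pow_atTop_nhds_zero_of_abs_lt_one (htabs r hr)
      have := ((h0.mul_const (y r)).const_mul (U p r))
      simpa [hχr] using this
  have hidem : (fun i => χ i * χ i) = χ := funext fun r => by
    by_cases hr : μ r = 0 <;> simp [hχ, hr]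
  have hzeroμχ : (fun i => μ i * χ i) = fun _ => (0 : ℝ) := funext fun r => by
    by_cases hr : μ r = 0 <;> simp [hχ, hr]
  have hLPi : L * Pi0 = 0 := by
    rw [hspec, hPi0, hconj, Matrix.diagonal_mul_diagonal, hzeroμχ]
    simp
  have hPiPi : Pi0 * Pi0 = Pi0 := by
    rw [hPi0, hconj, Matrix.diagonal_mul_diagonal, hidem]
  have hPiKer : ∀ v : Fin n × Fin d → ℝ, L *ᵥ v = 0 → Pi0 *ᵥ v = v := by
    intro v hv
    have hm : star U * L = Matrix.diagonal μ * star U := by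
      rw [hspec]
      calc star U * (U * Matrix.diagonal μ * star U)
          = (star U * U) * (Matrix.diagonal μ * star U) := by simp only [Matrix.mul_assoc]
        _ = Matrix.diagonal μ * star U := by rw [hU1, Matrix.one_mul]
    have hyμ : Matrix.diagonal μ *ᵥ (star U *ᵥ v) = 0 := by
      rw [Matrix.mulVec_mulVec, ← hm, ← Matrix.mulVec_mulVec, hv, Matrix.mulVec_zero]
    have hχy : Matrix.diagonal χ *ᵥ (star U *ᵥ v) = star U *ᵥ v := by
      funext r
      have h2 : μ r * (star U *ᵥ v) r = 0 := by
        have := congrFun hyμ r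
        rwa [Matrix.mulVec_diagonal] at this
      rw [Matrix.mulVec_diagonal]
      by_cases hr : μ r = 0
      · simp [hχ, hr]
      · have h3 : (star U *ᵥ v) r = 0 := by
          rcases mul_eq_zero.mp h2 with h | h
          · exact absurd h hr
          · exact h
        simp [hχ, hr, h3]
    rw [hPi0, ← Matrix.mulVec_mulVec, ← Matrix.mulVec_mulVec, hχy, Matrix.mulVec_mulVec,
      hU2, Matrix.one_mulVec]
  have hPisymm : ∀ p q, Pi0 p q = Pi0 q p := by
    intro p q
    rw [hPi0]
    simp only [Matrix.mul_apply, Matrix.diagonal_apply, Matrix.star_apply, star_trivial,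
      ite_mul, zero_mul, mul_ite, mul_zero, Finset.sum_ite_eq, Finset.sum_ite_eq',
      Finset.mem_univ, if_true]
    exact Finset.sum_congr rfl fun s _ => by ring
  constructor
  · -- convergence implies kernel characterization
    intro hconv v
    constructor
    · intro hv
      refine ⟨fun b => (∑ i, v (i, b)) / (n : ℝ), ?_⟩
      have hstep : ((1 : Matrix (Fin n × Fin d) (Fin n × Fin d) ℝ) - α • L) *ᵥ v = v := by
        rw [Matrix.sub_mulVec, Matrix.one_mulVec, Matrix.smul_mulVec, hv]
        simp
      have hPv : ∀ k : ℕ,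
          (((1 : Matrix (Fin n × Fin d) (Fin n × Fin d) ℝ) - α • L) ^ k) *ᵥ v = v := by
        intro k
        induction k with
        | zero => simp [Matrix.one_mulVec]
        | succ k ih => rw [pow_succ, ← Matrix.mulVec_mulVec, hstep, ih]
      have h1 := hconv v
      simp only [hPv] at h1
      exact tendsto_nhds_unique (tendsto_const_nhds) h1
    · rintro ⟨w, rfl⟩
      exact hcons w
  · -- kernel characterization implies convergence
    intro hker x0
    set a : Fin n × Fin d → ℝ := fun p : Fin n × Fin d => (∑ i : Fin n, x0 (i, p.2)) / (n : ℝ)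
      with ha
    have hn0 : (n : ℝ) ≠ 0 := by
      have : 0 < n := lt_of_lt_of_le Nat.zero_lt_one hn
      exact_mod_cast this.ne'
    have hLa : L *ᵥ a = 0 := by
      have := hcons (fun b => (∑ i : Fin n, x0 (i, b)) / (n : ℝ))
      exact this
    have hPia : Pi0 *ᵥ a = a := hPiKer a hLa
    set z : Fin n × Fin d → ℝ := x0 - a with hz
    have hzsum : ∀ b, (∑ i, z (i, b)) = 0 := by
      intro b
      simp only [hz, Pi.sub_apply, Finset.sum_sub_distrib, ha]
      rw [Finset.sum_const, Finset.card_univ]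
      simp only [Fintype.card_fin, nsmul_eq_mul]
      field_simp
      ring
    have hzorth : ∀ w : Fin d → ℝ, z ⬝ᵥ (fun p : Fin n × Fin d => w p.2) = 0 := by
      intro w
      calc z ⬝ᵥ (fun p : Fin n × Fin d => w p.2)
          = ∑ b, (∑ i, z (i, b)) * w b := by
            simp only [dotProduct, Fintype.sum_prod_type, Finset.sum_mul]
            rw [Finset.sum_comm]
        _ = 0 := by simp [hzsum]
    have hPiz : Pi0 *ᵥ z = 0 := by
      have h1 : L *ᵥ (Pi0 *ᵥ z) = 0 := by
        rw [Matrix.mulVec_mulVec, hLPi, Matrix.zero_mulVec]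
      obtain ⟨w, hw⟩ := (hker _).mp h1
      have h2 : z ⬝ᵥ (Pi0 *ᵥ z) = 0 := by rw [hw]; exact hzorth w
      have h3 : (Pi0 *ᵥ z) ⬝ᵥ (Pi0 *ᵥ z) = 0 := by
        rw [dot_symm Pi0 hPisymm (Pi0 *ᵥ z) z, Matrix.mulVec_mulVec, hPiPi, h2]
      funext p
      have h5 : ∑ q, (Pi0 *ᵥ z) q * (Pi0 *ᵥ z) q = 0 := h3
      have h6 := (Finset.sum_eq_zero_iff_of_nonneg
        (fun q _ => mul_self_nonneg ((Pi0 *ᵥ z) q))).mp h5 p (Finset.mem_univ p)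
      exact mul_self_eq_zero.mp h6
    have hPix0 : Pi0 *ᵥ x0 = a := by
      have hx : x0 = a + z := by rw [hz]; abel
      rw [hx, Matrix.mulVec_add, hPia, hPiz, add_zero]
    have hfin := hlim x0
    rw [hPix0] at hfin
    exact hfin
end

section
/- Let (L_k)_{k∈ℕ} be a sequence of nd×nd real symmetric positive semidefinite matrices such that L_k(1_n ⊗ v) = 0 for every v ∈ ℝ^d and ‖L_k y‖ ≤ μ‖y‖ for all y ∈ ℝ^{nd} and all k, where μ > 0. Let 0 < α < 1/μ and define x(k+1) = (I_{nd} − αL_k)x(k) from any x(0) ∈ ℝ^{nd}. Then: (a) the block sum Σ_{i=1}^n x_i(k) = Σ_{i=1}^n x_i(0) for all k; (b) L_k x(k) → 0 as k → ∞; and (c) for every fixed integer s ≥ 0, L_{k+s} x(k) → 0 as k → ∞. -/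
open Matrix BigOperators Filter

/-- The Euclidean norm on a finite product of copies of `ℝ`. -/
noncomputable def enorm₂ {ι : Type*} [Fintype ι] (v : ι → ℝ) : ℝ := Real.sqrt (∑ i, v i ^ 2)

lemma enorm_nonneg' {ι : Type*} [Fintype ι] (v : ι → ℝ) : 0 ≤ enorm₂ v := Real.sqrt_nonneg _

lemma enorm_zero' {ι : Type*} [Fintype ι] : enorm₂ (0 : ι → ℝ) = 0 := by simp [enorm₂]

lemma enorm_sq {ι : Type*} [Fintype ι] (v : ι → ℝ) : enorm₂ v ^ 2 = dotProduct v v := by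
  rw [enorm₂, Real.sq_sqrt (by positivity)]
  simp [dotProduct, sq]

lemma enorm_eq_norm {ι : Type*} [Fintype ι] (v : EuclideanSpace ℝ ι) : enorm₂ v = ‖v‖ := by
  rw [EuclideanSpace.norm_eq]
  simp [enorm₂, sq_abs]

lemma dot_le_enorm {ι : Type*} [Fintype ι] (v w : ι → ℝ) :
    dotProduct v w ≤ enorm₂ v * enorm₂ w := by
  have h := real_inner_le_norm (F := EuclideanSpace ℝ ι) (WithLp.toLp 2 v) (WithLp.toLp 2 w)
  rw [← enorm_eq_norm, ← enorm_eq_norm] at h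
  convert h using 1
  simp [dotProduct, PiLp.inner_apply, mul_comm]

lemma abs_apply_le_enorm {ι : Type*} [Fintype ι] (v : ι → ℝ) (i : ι) : |v i| ≤ enorm₂ v := by
  rw [← Real.sqrt_sq_eq_abs]
  apply Real.sqrt_le_sqrt
  exact Finset.single_le_sum (fun j _ => sq_nonneg (v j)) (Finset.mem_univ i)

lemma enorm_continuous {ι : Type*} [Fintype ι] : Continuous (enorm₂ (ι := ι)) := by
  unfold enorm₂
  fun_prop

lemma tendsto_of_enorm_tendsto {ι : Type*} [Fintype ι] (v : ℕ → ι → ℝ)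
    (h : Tendsto (fun k => enorm₂ (v k)) atTop (nhds 0)) : Tendsto v atTop (nhds 0) := by
  rw [tendsto_pi_nhds]
  intro i
  exact squeeze_zero_norm (fun k => abs_apply_le_enorm (v k) i) h

lemma psd_transpose_eq {ι : Type*} [Fintype ι] [DecidableEq ι] {A : Matrix ι ι ℝ}
    (hA : A.PosSemidef) : Aᵀ = A := by
  have := hA.1
  rwa [Matrix.IsHermitian, Matrix.conjTranspose_eq_transpose_of_trivial] at this

open scoped MatrixOrder in
lemma key_ineq {ι : Type*} [Fintype ι] [DecidableEq ι] {A : Matrix ι ι ℝ} (hA : A.PosSemidef)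
    {μ : ℝ} (hb : ∀ y, enorm₂ (A.mulVec y) ≤ μ * enorm₂ y) (v : ι → ℝ) :
    dotProduct (A.mulVec v) (A.mulVec v) ≤ μ * dotProduct v (A.mulVec v) := by
  set S := CFC.sqrt A with hS
  have hSS : S * S = A := CFC.sqrt_mul_sqrt_self A hA.nonneg
  have hSsym : Sᵀ = S := psd_transpose_eq (CFC.sqrt_nonneg A).posSemidef
  set z := S.mulVec v with hz
  have hAv : A.mulVec v = S.mulVec z := by rw [hz, Matrix.mulVec_mulVec, hSS]
  have h1 : dotProduct (A.mulVec v) (A.mulVec v) = dotProduct z (A.mulVec z) := by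
    rw [hAv]
    rw [Matrix.dotProduct_mulVec, ← Matrix.mulVec_transpose, hSsym, Matrix.mulVec_mulVec, hSS,
      dotProduct_comm]
  have h2 : dotProduct v (A.mulVec v) = dotProduct z z := by
    rw [hAv, Matrix.dotProduct_mulVec, ← Matrix.mulVec_transpose, hSsym]
  rw [h1, h2]
  calc dotProduct z (A.mulVec z) ≤ enorm₂ z * enorm₂ (A.mulVec z) := dot_le_enorm _ _
    _ ≤ enorm₂ z * (μ * enorm₂ z) := mul_le_mul_of_nonneg_left (hb z) (enorm_nonneg' z)
    _ = μ * (enorm₂ z ^ 2) := by ring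
    _ = μ * dotProduct z z := by rw [enorm_sq]

lemma block_sum_mulVec_zero {n d : ℕ} {A : Matrix (Fin n × Fin d) (Fin n × Fin d) ℝ}
    (hA : A.PosSemidef)
    (hker : ∀ v : Fin d → ℝ, A.mulVec (fun p : Fin n × Fin d => v p.2) = 0)
    (y : Fin n × Fin d → ℝ) (a : Fin d) :
    ∑ i : Fin n, A.mulVec y (i, a) = 0 := by
  have hsym : Aᵀ = A := psd_transpose_eq hA
  set e : Fin n × Fin d → ℝ := fun p => if p.2 = a then 1 else 0 with he
  have h1 : ∑ i : Fin n, A.mulVec y (i, a) = dotProduct e (A.mulVec y) := by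
    rw [dotProduct, Fintype.sum_prod_type]
    simp [he]
  rw [h1, Matrix.dotProduct_mulVec, ← Matrix.mulVec_transpose, hsym]
  have : A.mulVec e = 0 := hker (fun b => if b = a then 1 else 0)
  rw [this, zero_dotProduct]

/-- For a sequence `(L_k)` of symmetric PSD matrices annihilating the
consensus space and uniformly bounded by `μ`, and `0 < α < 1/μ`, the iteration
`x(k+1) = (I − α L_k) x(k)` preserves the block sum, and `L_k x(k) → 0`; moreover
`L_{k+s} x(k) → 0` for every fixed `s`. -/
theorem switching_laplacian_iteration_properties
    (n d : ℕ) (hn : 1 ≤ n) (hd : 1 ≤ d)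
    (L : ℕ → Matrix (Fin n × Fin d) (Fin n × Fin d) ℝ)
    (hLpsd : ∀ k, (L k).PosSemidef)
    (hLker : ∀ (k : ℕ) (v : Fin d → ℝ), (L k).mulVec (fun p : Fin n × Fin d => v p.2) = 0)
    (μ : ℝ) (hμ : 0 < μ)
    (hbound : ∀ (k : ℕ) (y : Fin n × Fin d → ℝ), enorm₂ ((L k).mulVec y) ≤ μ * enorm₂ y)
    (α : ℝ) (hα0 : 0 < α) (hα1 : α < 1 / μ)
    (x : ℕ → Fin n × Fin d → ℝ)
    (hupd : ∀ k, x (k + 1) = x k - α • (L k).mulVec (x k)) :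
    (∀ (k : ℕ) (a : Fin d), ∑ i : Fin n, x k (i, a) = ∑ i : Fin n, x 0 (i, a)) ∧
    (Tendsto (fun k : ℕ => (L k).mulVec (x k)) atTop (nhds 0)) ∧
    (∀ s : ℕ, Tendsto (fun k : ℕ => (L (k + s)).mulVec (x k)) atTop (nhds 0)) := by
  have hαμ : α * μ < 1 := by
    rw [lt_div_iff₀ hμ] at hα1
    linarith
  -- part (a)
  have parta : ∀ (k : ℕ) (a : Fin d), ∑ i : Fin n, x k (i, a) = ∑ i : Fin n, x 0 (i, a) := by
    intro k a
    induction k with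
    | zero => rfl
    | succ k ih =>
      rw [hupd k]
      simp only [Pi.sub_apply, Pi.smul_apply, smul_eq_mul, Finset.sum_sub_distrib,
        ← Finset.mul_sum]
      rw [block_sum_mulVec_zero (hLpsd k) (hLker k) (x k) a]
      simpa using ih
  -- Lyapunov setup
  set f : ℕ → ℝ := fun k => dotProduct (x k) (x k) with hf
  set g : ℕ → ℝ := fun k => dotProduct (x k) ((L k).mulVec (x k)) with hg
  set c : ℝ := α * (2 - α * μ) with hc
  have hcpos : 0 < c := by
    have : 1 < 2 - α * μ := by linarith
    positivity
  have hgnn : ∀ k, 0 ≤ g k := fun k => by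
    have := (hLpsd k).dotProduct_mulVec_nonneg (x k)
    simpa using this
  have hfnn : ∀ k, 0 ≤ f k := fun k => by
    have : (0:ℝ) ≤ enorm₂ (x k) ^ 2 := sq_nonneg _
    rwa [enorm_sq] at this
  have hstep : ∀ k, f (k + 1) ≤ f k - c * g k := by
    intro k
    have hkey := key_ineq (hLpsd k) (hbound k) (x k)
    have hexp : f (k + 1) =
        f k - 2 * α * g k + α ^ 2 * dotProduct ((L k).mulVec (x k)) ((L k).mulVec (x k)) := by
      simp only [hf, hg, hupd k, sub_dotProduct, dotProduct_sub,
        smul_dotProduct, dotProduct_smul, smul_eq_mul]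
      rw [dotProduct_comm ((L k).mulVec (x k)) (x k)]
      ring
    have hα2 : (0:ℝ) ≤ α ^ 2 := sq_nonneg α
    rw [hexp, hc]
    nlinarith [mul_le_mul_of_nonneg_left hkey hα2]
  -- summability of g
  have hsumle : ∀ K, c * (∑ k ∈ Finset.range K, g k) + f K ≤ f 0 := by
    intro K
    induction K with
    | zero => simp
    | succ K ih =>
      rw [Finset.sum_range_succ]
      have := hstep K
      nlinarith
  have hsummable : Summable g := by
    apply summable_of_sum_range_le hgnn
    intro K
    have h1 := hsumle K
    have h2 := hfnn K
    have h3 : c * ∑ k ∈ Finset.range K, g k ≤ f 0 := by linarith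
    exact (le_div_iff₀' hcpos).mpr h3
  have hg0 : Tendsto g atTop (nhds 0) := hsummable.tendsto_atTop_zero
  -- part (b)
  have henorm_tendsto : Tendsto (fun k => enorm₂ ((L k).mulVec (x k))) atTop (nhds 0) := by
    have hb : ∀ k, enorm₂ ((L k).mulVec (x k)) ≤ Real.sqrt (μ * g k) := by
      intro k
      rw [← Real.sqrt_sq (enorm_nonneg' _)]
      apply Real.sqrt_le_sqrt
      rw [enorm_sq]
      exact key_ineq (hLpsd k) (hbound k) (x k)
    have hsq : Tendsto (fun k => Real.sqrt (μ * g k)) atTop (nhds 0) := by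
      have : Tendsto (fun k => μ * g k) atTop (nhds (μ * 0)) := hg0.const_mul μ
      rw [mul_zero] at this
      have := (Real.continuous_sqrt.tendsto 0).comp this
      simpa [Function.comp_def] using this
    exact squeeze_zero (fun k => enorm_nonneg' _) hb hsq
  have partb : Tendsto (fun k : ℕ => (L k).mulVec (x k)) atTop (nhds 0) :=
    tendsto_of_enorm_tendsto _ henorm_tendsto
  refine ⟨parta, partb, ?_⟩
  -- part (c)
  intro s
  induction s with
  | zero => simpa using partb
  | succ s ih =>
    have hdecomp : ∀ k, (L (k + (s + 1))).mulVec (x k) =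
        (L (k + 1 + s)).mulVec (x (k + 1)) +
          α • (L (k + (s + 1))).mulVec ((L k).mulVec (x k)) := by
      intro k
      have hx : x k = x (k + 1) + α • (L k).mulVec (x k) := by
        rw [hupd k]; abel
      have hidx : k + (s + 1) = k + 1 + s := by omega
      conv_lhs => rw [hx]
      rw [Matrix.mulVec_add, Matrix.mulVec_smul, hidx]
    have h1 : Tendsto (fun k => (L (k + 1 + s)).mulVec (x (k + 1))) atTop (nhds 0) := by
      have := ih.comp (tendsto_add_atTop_nat 1)
      exact this
    have h2 : Tendsto (fun k => (L (k + (s + 1))).mulVec ((L k).mulVec (x k))) atTop (nhds 0) := by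
      apply tendsto_of_enorm_tendsto
      have hez : Tendsto (fun k => enorm₂ ((L k).mulVec (x k))) atTop (nhds 0) := henorm_tendsto
      have hb : ∀ k, enorm₂ ((L (k + (s + 1))).mulVec ((L k).mulVec (x k))) ≤
          μ * enorm₂ ((L k).mulVec (x k)) := fun k => hbound _ _
      have hμz : Tendsto (fun k => μ * enorm₂ ((L k).mulVec (x k))) atTop (nhds 0) := by
        have := hez.const_mul μ
        simpa using this
      exact squeeze_zero (fun k => enorm_nonneg' _) hb hμz
    have h2' : Tendsto (fun k => α • (L (k + (s + 1))).mulVec ((L k).mulVec (x k))) atTop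
        (nhds 0) := by
      have := h2.const_smul α
      simpa using this
    have := h1.add h2'
    rw [add_zero] at this
    exact this.congr (fun k => (hdecomp k).symm)
end

section
/- In the graph consensus setting, suppose each A_i is invertible and there exist γ_i > 0 with yᵀA_i⁻¹y ≥ γ_i‖y‖² for all y ∈ ℝ^d; set γ_min = min_i γ_i and α_max = max_i α_i. Then for every k ∈ ℕ, Σ_{i=1}^n (x_i(k+1) − x_i(k))ᵀ ( Σ_{j∈N(i)} (x_i(k) − x_j(k)) ) ≤ −(γ_min/α_max) Σ_{i=1}^n ‖x_i(k+1) − x_i(k)‖². -/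
open Matrix BigOperators

/-- The Euclidean norm on `Fin d → ℝ`. -/
noncomputable def vecEnorm {d : ℕ} (v : Fin d → ℝ) : ℝ := Real.sqrt (∑ a, v a ^ 2)

/-- In the graph consensus setting with invertible weights `A_i`
satisfying `yᵀ A_i⁻¹ y ≥ γ_i ‖y‖²`, with `γ_min = min_i γ_i` and
`α_max = max_i α_i`, one has for every `k`:
`∑_i (x_i(k+1) − x_i(k))ᵀ (∑_{j ∈ N(i)} (x_i(k) − x_j(k)))
  ≤ −(γ_min/α_max) ∑_i ‖x_i(k+1) − x_i(k)‖²`. -/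
theorem descent_direction_inequality
    (n d : ℕ) (hn : 0 < n) (hd : 0 < d)
    (Γ : SimpleGraph (Fin n)) [DecidableRel Γ.Adj]
    (A : Fin n → Matrix (Fin d) (Fin d) ℝ) (hinv : ∀ i, IsUnit (A i))
    (α : Fin n → ℝ) (hα : ∀ i, 0 < α i)
    (γ : Fin n → ℝ) (hγ : ∀ i, 0 < γ i)
    (hquad : ∀ (i : Fin n) (y : Fin d → ℝ),
      γ i * vecEnorm y ^ 2 ≤ y ⬝ᵥ (A i)⁻¹.mulVec y)
    (x : ℕ → Fin n → Fin d → ℝ)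
    (hupd : ∀ k i, x (k + 1) i =
      x k i - α i • (A i).mulVec (∑ j ∈ Γ.neighborFinset i, (x k i - x k j))) :
    ∀ k : ℕ,
      ∑ i : Fin n,
          (x (k + 1) i - x k i) ⬝ᵥ (∑ j ∈ Γ.neighborFinset i, (x k i - x k j)) ≤
        -((Finset.univ.inf' (Finset.univ_nonempty_iff.mpr ⟨⟨0, hn⟩⟩) γ) /
            (Finset.univ.sup' (Finset.univ_nonempty_iff.mpr ⟨⟨0, hn⟩⟩) α)) *
          ∑ i : Fin n, vecEnorm (x (k + 1) i - x k i) ^ 2 := by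
  intro k
  set c : ℝ := Finset.univ.inf' (Finset.univ_nonempty_iff.mpr ⟨⟨0, hn⟩⟩) γ with hc
  set m : ℝ := Finset.univ.sup' (Finset.univ_nonempty_iff.mpr ⟨⟨0, hn⟩⟩) α with hm
  have hcle : ∀ i, c ≤ γ i := fun i => Finset.inf'_le _ (Finset.mem_univ i)
  have hmge : ∀ i, α i ≤ m := fun i => Finset.le_sup' _ (Finset.mem_univ i)
  have hmpos : 0 < m := lt_of_lt_of_le (hα ⟨0, hn⟩) (hmge ⟨0, hn⟩)
  rw [neg_mul, Finset.mul_sum, ← Finset.sum_neg_distrib]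
  apply Finset.sum_le_sum
  intro i _
  set s : Fin d → ℝ := ∑ j ∈ Γ.neighborFinset i, (x k i - x k j) with hs
  set v : Fin d → ℝ := x (k + 1) i - x k i with hv
  have hveq : v = -(α i) • (A i).mulVec s := by
    rw [hv, hupd k i, sub_sub_cancel_left, neg_smul]
  have hAinv : (A i)⁻¹ * A i = 1 :=
    Matrix.nonsing_inv_mul _ ((Matrix.isUnit_iff_isUnit_det _).mp (hinv i))
  have hinvv : (A i)⁻¹.mulVec v = -(α i) • s := by
    rw [hveq, Matrix.mulVec_smul, Matrix.mulVec_mulVec, hAinv, Matrix.one_mulVec]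
  have hdot : v ⬝ᵥ (A i)⁻¹.mulVec v = -(α i) * (v ⬝ᵥ s) := by
    rw [hinvv, dotProduct_smul, smul_eq_mul]
  have hkey : γ i * vecEnorm v ^ 2 ≤ -(α i) * (v ⬝ᵥ s) := hdot ▸ hquad i v
  have hE : 0 ≤ vecEnorm v ^ 2 := sq_nonneg _
  have h1 : v ⬝ᵥ s ≤ -(γ i / α i * vecEnorm v ^ 2) := by
    rw [le_neg]
    rw [div_mul_eq_mul_div, div_le_iff₀ (hα i)]
    nlinarith [hα i]
  refine h1.trans ?_
  rw [neg_le_neg_iff]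
  have : c / m ≤ γ i / α i := by
    apply div_le_div₀ (hγ i).le (hcle i) (hα i) (hmge i)
  nlinarith
end

section
/- In the graph consensus setting, suppose each A_i is invertible and there exist γ_i > 0 with yᵀA_i⁻¹y ≥ γ_i‖y‖² for all y ∈ ℝ^d; set γ_min = min_i γ_i and α_max = max_i α_i. Let μ > 0 satisfy Σ_{{i,j}∈E(Γ)} ‖y_i − y_j‖² ≤ μ Σ_{i=1}^n ‖y_i‖² for all (y_1,…,y_n) ∈ (ℝ^d)^n (i.e., the largest Laplacian eigenvalue of Γ is at most μ). If 0 < α_max < 2γ_min/μ, then for every k ∈ ℕ, V(x(k+1)) − V(x(k)) ≤ −(γ_min/α_max − μ/2) Σ_{i=1}^n ‖x_i(k+1) − x_i(k)‖² ≤ 0, so V is non-increasing along the iteration. -/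
open Matrix BigOperators

/-- The Euclidean norm on `Fin d → ℝ`. -/
noncomputable def enorm {d : ℕ} (v : Fin d → ℝ) : ℝ := Real.sqrt (∑ a, v a ^ 2)

lemma enorm_sq' {d : ℕ} (v : Fin d → ℝ) : _root_.enorm v ^ 2 = ∑ a, v a ^ 2 :=
  Real.sq_sqrt (Finset.sum_nonneg fun _ _ => sq_nonneg _)

lemma enorm_add_sq {d : ℕ} (u w : Fin d → ℝ) :
    _root_.enorm (u + w) ^ 2 = _root_.enorm u ^ 2 + 2 * (u ⬝ᵥ w) + _root_.enorm w ^ 2 := by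
  simp only [enorm_sq', dotProduct]
  rw [Finset.mul_sum, ← Finset.sum_add_distrib, ← Finset.sum_add_distrib]
  exact Finset.sum_congr rfl fun a _ => by simp only [Pi.add_apply]; ring

lemma sum_dotProduct' {d : ℕ} {ι : Type*} (s : Finset ι) (f : ι → Fin d → ℝ) (v : Fin d → ℝ) :
    (∑ j ∈ s, f j) ⬝ᵥ v = ∑ j ∈ s, f j ⬝ᵥ v := by
  simp only [dotProduct, Finset.sum_apply, Finset.sum_mul]
  exact Finset.sum_comm

lemma sum_pairs {n : ℕ} (Γ : SimpleGraph (Fin n)) [DecidableRel Γ.Adj] (f : Fin n → Fin n → ℝ) :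
    ∑ i : Fin n, ∑ j ∈ Finset.univ.filter (fun j => i < j ∧ Γ.Adj i j), (f i j + f j i)
      = ∑ i : Fin n, ∑ j ∈ Finset.univ.filter (fun j => Γ.Adj i j), f i j := by
  have hB : ∑ i : Fin n, ∑ j : Fin n, (if i < j ∧ Γ.Adj i j then f j i else 0)
      = ∑ i : Fin n, ∑ j : Fin n, (if j < i ∧ Γ.Adj i j then f i j else 0) := by
    rw [Finset.sum_comm]
    refine Finset.sum_congr rfl fun i _ => Finset.sum_congr rfl fun j _ => ?_
    congr 1
    simp [Γ.adj_comm]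
  calc ∑ i : Fin n, ∑ j ∈ Finset.univ.filter (fun j => i < j ∧ Γ.Adj i j), (f i j + f j i)
      = ∑ i : Fin n, ∑ j : Fin n,
          ((if i < j ∧ Γ.Adj i j then f i j else 0) + (if i < j ∧ Γ.Adj i j then f j i else 0)) := by
        refine Finset.sum_congr rfl fun i _ => ?_
        rw [Finset.sum_filter]
        refine Finset.sum_congr rfl fun j _ => ?_
        split_ifs <;> simp
    _ = ∑ i : Fin n, ∑ j : Fin n, (if Γ.Adj i j then f i j else 0) := by
        simp only [Finset.sum_add_distrib]
        rw [hB, ← Finset.sum_add_distrib]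
        simp only [← Finset.sum_add_distrib]
        refine Finset.sum_congr rfl fun i _ => Finset.sum_congr rfl fun j _ => ?_
        by_cases hadj : Γ.Adj i j
        · rcases lt_trichotomy i j with h | h | h
          · simp [h, hadj, (not_lt.mpr h.le : ¬ j < i)]
          · exact absurd (h ▸ hadj) (Γ.irrefl)
          · simp [h, hadj, (not_lt.mpr h.le : ¬ i < j)]
        · simp [hadj]
    _ = ∑ i : Fin n, ∑ j ∈ Finset.univ.filter (fun j => Γ.Adj i j), f i j := by
        refine Finset.sum_congr rfl fun i _ => ?_
        rw [Finset.sum_filter]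

/-- The Lyapunov function `V(x) = ½ ∑_{{i,j} ∈ E(Γ)} ‖x_i − x_j‖²` (each undirected
edge counted once, as the pair `i < j`). -/
noncomputable def lyapV {n d : ℕ} (Γ : SimpleGraph (Fin n)) [DecidableRel Γ.Adj]
    (x : Fin n → Fin d → ℝ) : ℝ :=
  (1 / 2) * ∑ i : Fin n, ∑ j ∈ Finset.univ.filter (fun j : Fin n => i < j ∧ Γ.Adj i j),
    _root_.enorm (x i - x j) ^ 2

/-- In the graph consensus setting with invertible weights `A_i`
satisfying `yᵀ A_i⁻¹ y ≥ γ_i ‖y‖²`, if the largest Laplacian eigenvalue of `Γ` is at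
most `μ` and `0 < α_max < 2 γ_min / μ`, then
`V(x(k+1)) − V(x(k)) ≤ −(γ_min/α_max − μ/2) ∑_i ‖x_i(k+1) − x_i(k)‖² ≤ 0`. -/
theorem lyapunov_nonincreasing_invertible_weights
    (n d : ℕ) (hn : 0 < n) (hd : 0 < d)
    (Γ : SimpleGraph (Fin n)) [DecidableRel Γ.Adj]
    (A : Fin n → Matrix (Fin d) (Fin d) ℝ) (hinv : ∀ i, IsUnit (A i))
    (α : Fin n → ℝ) (hα : ∀ i, 0 < α i)
    (γ : Fin n → ℝ) (hγ : ∀ i, 0 < γ i)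
    (hquad : ∀ (i : Fin n) (y : Fin d → ℝ),
      γ i * _root_.enorm y ^ 2 ≤ y ⬝ᵥ (A i)⁻¹.mulVec y)
    (γmin αmax : ℝ)
    (hγmin : γmin = Finset.univ.inf' (Finset.univ_nonempty_iff.mpr ⟨⟨0, hn⟩⟩) γ)
    (hαmax : αmax = Finset.univ.sup' (Finset.univ_nonempty_iff.mpr ⟨⟨0, hn⟩⟩) α)
    (μ : ℝ) (hμ : 0 < μ)
    (hμbound : ∀ y : Fin n → Fin d → ℝ,
      ∑ i : Fin n, ∑ j ∈ Finset.univ.filter (fun j : Fin n => i < j ∧ Γ.Adj i j),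
          _root_.enorm (y i - y j) ^ 2 ≤ μ * ∑ i : Fin n, _root_.enorm (y i) ^ 2)
    (hstep : αmax < 2 * γmin / μ)
    (x : ℕ → Fin n → Fin d → ℝ)
    (hupd : ∀ k i, x (k + 1) i =
      x k i - α i • (A i).mulVec (∑ j ∈ Γ.neighborFinset i, (x k i - x k j))) :
    ∀ k : ℕ,
      lyapV Γ (x (k + 1)) - lyapV Γ (x k) ≤
          -(γmin / αmax - μ / 2) * ∑ i : Fin n, _root_.enorm (x (k + 1) i - x k i) ^ 2 ∧
      -(γmin / αmax - μ / 2) * ∑ i : Fin n, _root_.enorm (x (k + 1) i - x k i) ^ 2 ≤ 0 := by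
  -- positivity facts
  have hαmax_pos : 0 < αmax := by
    have h1 : α ⟨0, hn⟩ ≤ αmax := hαmax ▸ Finset.le_sup' α (Finset.mem_univ _)
    exact lt_of_lt_of_le (hα _) h1
  have hγmin_pos : 0 < γmin := by
    rw [hγmin]
    exact (Finset.lt_inf'_iff _).mpr fun i _ => hγ i
  have hc : 0 < γmin / αmax - μ / 2 := by
    have h1 : αmax * μ < 2 * γmin := (lt_div_iff₀ hμ).mp hstep
    have h2 : μ / 2 < γmin / αmax := by
      rw [div_lt_div_iff₀ two_pos hαmax_pos]
      nlinarith
    linarith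
  intro k
  set Δ : Fin n → Fin d → ℝ := fun i => x (k + 1) i - x k i with hΔdef
  set g : Fin n → Fin d → ℝ := fun i => ∑ j ∈ Γ.neighborFinset i, (x k i - x k j) with hgdef
  have hS0 : 0 ≤ ∑ i : Fin n, _root_.enorm (Δ i) ^ 2 :=
    Finset.sum_nonneg fun _ _ => sq_nonneg _
  have hΔeq : ∀ i, Δ i = -(α i • (A i).mulVec (g i)) := by
    intro i
    rw [hΔdef]
    simp only
    rw [hupd k i, hgdef]
    abel
  have hgi : ∀ i, g i = (-(α i)⁻¹) • (A i)⁻¹.mulVec (Δ i) := by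
    intro i
    have hA1 : (A i)⁻¹ * A i = 1 :=
      Matrix.nonsing_inv_mul _ ((Matrix.isUnit_iff_isUnit_det _).mp (hinv i))
    have hM : (A i).mulVec (g i) = (-(α i)⁻¹) • Δ i := by
      rw [hΔeq i, smul_neg, neg_smul, neg_neg, smul_smul, inv_mul_cancel₀ (hα i).ne', one_smul]
    have : (A i)⁻¹.mulVec ((A i).mulVec (g i)) = g i := by
      rw [Matrix.mulVec_mulVec, hA1, Matrix.one_mulVec]
    rw [← this, hM, Matrix.mulVec_smul]
  -- the dot-product sum bound
  have h2 : ∑ i : Fin n, Δ i ⬝ᵥ g i ≤ -(γmin / αmax) * ∑ i : Fin n, _root_.enorm (Δ i) ^ 2 := by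
    rw [Finset.mul_sum]
    refine Finset.sum_le_sum fun i _ => ?_
    have hq := hquad i (Δ i)
    have hratio : γmin / αmax ≤ γ i / α i :=
      div_le_div₀ (hγ i).le (hγmin ▸ Finset.inf'_le _ (Finset.mem_univ i)) (hα i)
        (hαmax ▸ Finset.le_sup' _ (Finset.mem_univ i))
    have hdot : Δ i ⬝ᵥ g i = -(α i)⁻¹ * (Δ i ⬝ᵥ (A i)⁻¹.mulVec (Δ i)) := by
      rw [hgi i, dotProduct_smul, smul_eq_mul]
    rw [hdot]
    have hneg : -(α i)⁻¹ ≤ 0 := by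
      have := inv_pos.mpr (hα i); linarith
    have step1 : -(α i)⁻¹ * (Δ i ⬝ᵥ (A i)⁻¹.mulVec (Δ i)) ≤ -(α i)⁻¹ * (γ i * _root_.enorm (Δ i) ^ 2) :=
      mul_le_mul_of_nonpos_left hq hneg
    have step2 : -(α i)⁻¹ * (γ i * _root_.enorm (Δ i) ^ 2) ≤ -(γmin / αmax) * _root_.enorm (Δ i) ^ 2 := by
      have hsq : 0 ≤ _root_.enorm (Δ i) ^ 2 := sq_nonneg _
      have : γmin / αmax * _root_.enorm (Δ i) ^ 2 ≤ γ i / α i * _root_.enorm (Δ i) ^ 2 :=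
        mul_le_mul_of_nonneg_right hratio hsq
      have heq : -(α i)⁻¹ * (γ i * _root_.enorm (Δ i) ^ 2) = -(γ i / α i * _root_.enorm (Δ i) ^ 2) := by
        field_simp
      rw [heq]
      linarith
    linarith
  -- the quadratic Laplacian bound
  have h3 : ∑ i : Fin n, ∑ j ∈ Finset.univ.filter (fun j : Fin n => i < j ∧ Γ.Adj i j),
        _root_.enorm (Δ i - Δ j) ^ 2 ≤ μ * ∑ i : Fin n, _root_.enorm (Δ i) ^ 2 := hμbound Δ
  -- exact decomposition of the Lyapunov difference
  have hXd : ∀ i j : Fin n, x (k + 1) i - x (k + 1) j = (x k i - x k j) + (Δ i - Δ j) := by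
    intro i j
    rw [hΔdef]
    simp only
    abel
  have expand : ∀ i j : Fin n, _root_.enorm (x (k + 1) i - x (k + 1) j) ^ 2
      = _root_.enorm (x k i - x k j) ^ 2 + 2 * ((x k i - x k j) ⬝ᵥ (Δ i - Δ j))
        + _root_.enorm (Δ i - Δ j) ^ 2 := by
    intro i j
    rw [hXd i j, enorm_add_sq]
  have hdotsum : ∑ i : Fin n, ∑ j ∈ Finset.univ.filter (fun j : Fin n => i < j ∧ Γ.Adj i j),
        ((x k i - x k j) ⬝ᵥ (Δ i - Δ j)) = ∑ i : Fin n, Δ i ⬝ᵥ g i := by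
    have key := sum_pairs Γ (fun i j => (x k i - x k j) ⬝ᵥ Δ i)
    calc ∑ i : Fin n, ∑ j ∈ Finset.univ.filter (fun j : Fin n => i < j ∧ Γ.Adj i j),
            ((x k i - x k j) ⬝ᵥ (Δ i - Δ j))
        = ∑ i : Fin n, ∑ j ∈ Finset.univ.filter (fun j : Fin n => i < j ∧ Γ.Adj i j),
            (((x k i - x k j) ⬝ᵥ Δ i) + ((x k j - x k i) ⬝ᵥ Δ j)) := by
          refine Finset.sum_congr rfl fun i _ => Finset.sum_congr rfl fun j _ => ?_
          rw [dotProduct_sub,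
            show x k j - x k i = -(x k i - x k j) by abel, neg_dotProduct]
          ring
      _ = ∑ i : Fin n, ∑ j ∈ Finset.univ.filter (fun j : Fin n => Γ.Adj i j),
            ((x k i - x k j) ⬝ᵥ Δ i) := key
      _ = ∑ i : Fin n, Δ i ⬝ᵥ g i := by
          refine Finset.sum_congr rfl fun i _ => ?_
          rw [hgdef]
          simp only
          rw [SimpleGraph.neighborFinset_eq_filter, dotProduct_comm,
            sum_dotProduct']
  have e1 : lyapV Γ (x (k + 1)) - lyapV Γ (x k)
      = (∑ i : Fin n, Δ i ⬝ᵥ g i)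
        + (1 / 2) * ∑ i : Fin n, ∑ j ∈ Finset.univ.filter (fun j : Fin n => i < j ∧ Γ.Adj i j),
            _root_.enorm (Δ i - Δ j) ^ 2 := by
    unfold lyapV
    rw [← hdotsum]
    simp only [expand, Finset.sum_add_distrib]
    simp only [← Finset.mul_sum]
    ring
  constructor
  · have hring : -(γmin / αmax - μ / 2) * ∑ i : Fin n, _root_.enorm (Δ i) ^ 2
        = -(γmin / αmax) * ∑ i : Fin n, _root_.enorm (Δ i) ^ 2
          + (μ / 2) * ∑ i : Fin n, _root_.enorm (Δ i) ^ 2 := by ring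
    rw [e1, hring]
    linarith
  · have := mul_nonneg hc.le hS0
    linarith
end

section
/- In the graph consensus setting, suppose each A_i is invertible and there exist γ_i > 0 with yᵀA_i⁻¹y ≥ γ_i‖y‖² for all y ∈ ℝ^d. Then for every k ∈ ℕ, Σ_{i=1}^n α_i⁻¹ A_i⁻¹ x_i(k) = Σ_{i=1}^n α_i⁻¹ A_i⁻¹ x_i(0); that is, the weighted sum Σ_i (α_i A_i)⁻¹ x_i(k) is invariant along the iteration. -/
open Matrix BigOperators

/-- In the graph consensus setting with invertible weights `A_i`
satisfying `yᵀ A_i⁻¹ y ≥ γ_i ‖y‖²`, the weighted sum `∑_i (α_i A_i)⁻¹ x_i(k)` is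
invariant along the iteration. -/
theorem weighted_sum_invariant
    (n d : ℕ) (hn : 0 < n) (hd : 0 < d)
    (Γ : SimpleGraph (Fin n)) [DecidableRel Γ.Adj]
    (A : Fin n → Matrix (Fin d) (Fin d) ℝ) (hinv : ∀ i, IsUnit (A i))
    (α : Fin n → ℝ) (hα : ∀ i, 0 < α i)
    (γ : Fin n → ℝ) (hγ : ∀ i, 0 < γ i)
    (hquad : ∀ (i : Fin n) (y : Fin d → ℝ),
      γ i * _root_.enorm y ^ 2 ≤ y ⬝ᵥ (A i)⁻¹.mulVec y)
    (x : ℕ → Fin n → Fin d → ℝ)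
    (hupd : ∀ k i, x (k + 1) i =
      x k i - α i • (A i).mulVec (∑ j ∈ Γ.neighborFinset i, (x k i - x k j))) :
    ∀ k : ℕ,
      ∑ i : Fin n, (α i)⁻¹ • (A i)⁻¹.mulVec (x k i) =
        ∑ i : Fin n, (α i)⁻¹ • (A i)⁻¹.mulVec (x 0 i) := by
  intro k
  induction k with
  | zero => rfl
  | succ k ih =>
    rw [← ih]
    have key : ∑ i : Fin n, ∑ j ∈ Γ.neighborFinset i, (x k i - x k j) = 0 := by
      have hswap : ∑ i : Fin n, ∑ j ∈ Γ.neighborFinset i, x k j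
          = ∑ i : Fin n, ∑ j ∈ Γ.neighborFinset i, x k i := by
        rw [Finset.sum_comm' (t' := (Finset.univ : Finset (Fin n))) (s' := fun j => Γ.neighborFinset j)]
        intro i j
        simp [SimpleGraph.mem_neighborFinset, SimpleGraph.adj_comm]
      calc ∑ i : Fin n, ∑ j ∈ Γ.neighborFinset i, (x k i - x k j)
          = ∑ i : Fin n, (∑ j ∈ Γ.neighborFinset i, x k i
              - ∑ j ∈ Γ.neighborFinset i, x k j) := by
            simp [Finset.sum_sub_distrib]
        _ = 0 := by rw [Finset.sum_sub_distrib, hswap, sub_self]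
    have hterm : ∀ i : Fin n,
        (α i)⁻¹ • (A i)⁻¹.mulVec (x (k+1) i)
          = (α i)⁻¹ • (A i)⁻¹.mulVec (x k i)
            - ∑ j ∈ Γ.neighborFinset i, (x k i - x k j) := by
      intro i
      have hA : (A i)⁻¹ * (A i) = 1 :=
        Matrix.nonsing_inv_mul (A i) ((Matrix.isUnit_iff_isUnit_det (A i)).mp (hinv i))
      rw [hupd k i, Matrix.mulVec_sub, smul_sub]
      congr 1
      rw [Matrix.mulVec_smul, Matrix.mulVec_mulVec, hA, Matrix.one_mulVec,
        smul_smul, inv_mul_cancel₀ (hα i).ne', one_smul]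
    calc ∑ i : Fin n, (α i)⁻¹ • (A i)⁻¹.mulVec (x (k+1) i)
        = ∑ i : Fin n, ((α i)⁻¹ • (A i)⁻¹.mulVec (x k i)
            - ∑ j ∈ Γ.neighborFinset i, (x k i - x k j)) := by
          exact Finset.sum_congr rfl fun i _ => hterm i
      _ = ∑ i : Fin n, (α i)⁻¹ • (A i)⁻¹.mulVec (x k i) := by
          rw [Finset.sum_sub_distrib, key, sub_zero]
end

section
/- In the graph consensus setting with each A_i symmetric positive semidefinite, suppose there exists x* ∈ ℝ^d such that x_i(k) → x* as k → ∞ for every i (the agents reach a consensus). Then x* ∈ X_i for every i, where X_i := x_i(0) + range(A_i); in particular the intersection ∩_{i=1}^n X_i is non-empty. Hence a necessary condition for consensus under this update is ∩_{i=1}^n X_i ≠ ∅. -/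
open Matrix BigOperators Filter

/-- In the graph consensus setting with symmetric PSD weights `A_i`,
if the agents reach a consensus `x*`, then `x* ∈ X_i = x_i(0) + range(A_i)` for every
`i`; in particular the intersection `∩_i X_i` is non-empty, so this non-empty
intersection is a necessary condition for consensus. -/
theorem consensus_point_in_intersection
    (n d : ℕ) (hn : 0 < n) (hd : 0 < d)
    (Γ : SimpleGraph (Fin n)) [DecidableRel Γ.Adj]
    (A : Fin n → Matrix (Fin d) (Fin d) ℝ) (hpsd : ∀ i, (A i).PosSemidef)
    (α : Fin n → ℝ) (hα : ∀ i, 0 < α i)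
    (x : ℕ → Fin n → Fin d → ℝ)
    (hupd : ∀ k i, x (k + 1) i =
      x k i - α i • (A i).mulVec (∑ j ∈ Γ.neighborFinset i, (x k i - x k j)))
    (xstar : Fin d → ℝ)
    (hconsensus : ∀ i : Fin n, Tendsto (fun k : ℕ => x k i) atTop (nhds xstar)) :
    (∀ i : Fin n, xstar - x 0 i ∈ LinearMap.range (A i).mulVecLin) ∧
    (⋂ i : Fin n,
      {z : Fin d → ℝ | z - x 0 i ∈ LinearMap.range (A i).mulVecLin}).Nonempty := by
  have key : ∀ i : Fin n, xstar - x 0 i ∈ LinearMap.range (A i).mulVecLin := by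
    intro i
    have hmem : ∀ k, x k i - x 0 i ∈ LinearMap.range (A i).mulVecLin := by
      intro k
      induction k with
      | zero => simp
      | succ k ih =>
        rw [hupd k i]
        have : x k i - α i • (A i).mulVec (∑ j ∈ Γ.neighborFinset i, (x k i - x k j))
            - x 0 i = (x k i - x 0 i) +
            (A i).mulVecLin ((-α i) • ∑ j ∈ Γ.neighborFinset i, (x k i - x k j)) := by
          rw [Matrix.mulVecLin_apply, Matrix.mulVec_smul, neg_smul]
          abel
        rw [this]
        exact Submodule.add_mem _ ih (LinearMap.mem_range_self _ _)
    have hclosed : IsClosed (LinearMap.range (A i).mulVecLin : Set (Fin d → ℝ)) :=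
      Submodule.closed_of_finiteDimensional _
    have htend : Tendsto (fun k : ℕ => x k i - x 0 i) atTop (nhds (xstar - x 0 i)) :=
      (hconsensus i).sub tendsto_const_nhds
    exact hclosed.mem_of_tendsto htend (Eventually.of_forall hmem)
  refine ⟨key, ⟨xstar, ?_⟩⟩
  simp only [Set.mem_iInter, Set.mem_setOf_eq]
  exact key
end
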